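/- arXiv:2003.09194 — 6 statements merged into one kernel-verified Lean document; each statement's English description precedes it below -/
import Mathlib

section
/- Gradient of the discriminant (Lemma 3.2(i), directional form). Fix λ ∈ ℂ*. Let q(x,ε), w(x,ε) be a one-parameter family of data with q̊(1) = q̊(0), and let M(x,ε) be the fundamental solution of the reduced sinh-Gordon equation with parameter λ and data (q(·,ε), w(·,ε)), jointly continuously differentiable in (x,ε) with equal mixed second partials. Write M(x,0) = [[m₁(x), m₂(x)],[m₃(x), m₄(x)]], denote by m̂₁, m̂₂, m̂₃, m̂₄ the entries of M(1,0), set δ := (m̂₁ − m̂₄)/2, q := q(·,0), and let Δ(ε) := (1/2)(M₁₁(1,ε) + M₂₂(1,ε)). Then (d/dε)Δ(ε)|_{ε=0} = ∫₀¹ G_q(x)·q̊(x) dx + ∫₀¹ G_p(x)·ẘ(x) dx, where G_q = (λ/4)·(m̂₂(m₃² − m₁²) + m̂₃(m₂² − m₄²) + 2δ(m₁m₂ − m₃m₄)) + (1/(64λ))·(e^{−q}(m̂₃m₂² − m̂₂m₁² + 2δ·m₁m₂) + e^{q}(m̂₂m₃² − m̂₃m₄² − 2δ·m₃m₄)) and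 G_p = (1/4)·(−m̂₂·m₁m₃ + m̂₃·m₂m₄ + δ·(m₁m₄ + m₂m₃)). -/
open MeasureTheory

noncomputable section

/-- The coefficient matrix of the reduced sinh-Gordon equation with spectral parameter `lam`,
where `aval = w + q'` and `qval = q`. -/
def coeffMat (lam aval qval : ℂ) : Matrix (Fin 2) (Fin 2) ℂ :=
  !![aval / 4, lam - Complex.exp qval / (16 * lam);
     -(lam - Complex.exp (-qval) / (16 * lam)), -(aval / 4)]

set_option maxHeartbeats 4000000 in
/-- **Gradient of the discriminant** (Lemma 3.2(i), directional form). -/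
theorem gradient_of_discriminant
    (lam : ℂ) (hlam : lam ≠ 0)
    (q w qx : ℝ → ℝ → ℂ) (qe we qex : ℝ → ℂ)
    (M Mx Me Mxe : ℝ → ℝ → Matrix (Fin 2) (Fin 2) ℂ)
    -- regularity of the data `q(·,ε)` (C¹) and `w(·,ε)` (continuous), jointly in `(x,ε)`
    (hq_cont : ContinuousOn (fun p : ℝ × ℝ => q p.1 p.2)
      (Set.Icc (0:ℝ) 1 ×ˢ (Set.univ : Set ℝ)))
    (hqx : ∀ ε : ℝ, ∀ x ∈ Set.Icc (0:ℝ) 1,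
      HasDerivWithinAt (fun t => q t ε) (qx x ε) (Set.Icc 0 1) x)
    (hqx_cont : ContinuousOn (fun p : ℝ × ℝ => qx p.1 p.2)
      (Set.Icc (0:ℝ) 1 ×ˢ (Set.univ : Set ℝ)))
    (hw_cont : ContinuousOn (fun p : ℝ × ℝ => w p.1 p.2)
      (Set.Icc (0:ℝ) 1 ×ˢ (Set.univ : Set ℝ)))
    -- directional derivatives `q̊`, `ẘ` of the data at `ε = 0`
    (hqe : ∀ x ∈ Set.Icc (0:ℝ) 1, HasDerivAt (fun e => q x e) (qe x) 0)
    (hwe : ∀ x ∈ Set.Icc (0:ℝ) 1, HasDerivAt (fun e => w x e) (we x) 0)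
    (hqe_cont : ContinuousOn qe (Set.Icc 0 1))
    (hwe_cont : ContinuousOn we (Set.Icc 0 1))
    (hq_mixed : ∀ x ∈ Set.Icc (0:ℝ) 1,
      HasDerivWithinAt qe (qex x) (Set.Icc 0 1) x ∧
      HasDerivAt (fun e => qx x e) (qex x) 0)
    -- the boundary condition `q̊(1) = q̊(0)`
    (hqe_bc : qe 1 = qe 0)
    -- `M(·,ε)` is the fundamental solution for each `ε`
    (hM0 : ∀ ε : ℝ, M 0 ε = 1)
    (hMx : ∀ ε : ℝ, ∀ x ∈ Set.Icc (0:ℝ) 1, ∀ i j : Fin 2,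
      HasDerivWithinAt (fun t => M t ε i j) (Mx x ε i j) (Set.Icc 0 1) x)
    (hODE : ∀ ε : ℝ, ∀ x ∈ Set.Icc (0:ℝ) 1,
      Mx x ε = coeffMat lam (w x ε + qx x ε) (q x ε) * M x ε)
    -- `M`, `∂ₓM`, `∂_εM` exist and are continuous in `(x,ε)`
    (hM_cont : ∀ i j : Fin 2, ContinuousOn (fun p : ℝ × ℝ => M p.1 p.2 i j)
      (Set.Icc (0:ℝ) 1 ×ˢ (Set.univ : Set ℝ)))
    (hMx_cont : ∀ i j : Fin 2, ContinuousOn (fun p : ℝ × ℝ => Mx p.1 p.2 i j)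
      (Set.Icc (0:ℝ) 1 ×ˢ (Set.univ : Set ℝ)))
    (hMe : ∀ ε : ℝ, ∀ x ∈ Set.Icc (0:ℝ) 1, ∀ i j : Fin 2,
      HasDerivAt (fun e => M x e i j) (Me x ε i j) ε)
    (hMe_cont : ∀ i j : Fin 2, ContinuousOn (fun p : ℝ × ℝ => Me p.1 p.2 i j)
      (Set.Icc (0:ℝ) 1 ×ˢ (Set.univ : Set ℝ)))
    -- equal mixed second partials `∂ₓ∂_εM = ∂_ε∂ₓM`
    (hM_mixed : ∀ ε : ℝ, ∀ x ∈ Set.Icc (0:ℝ) 1, ∀ i j : Fin 2,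
      HasDerivAt (fun e => Mx x e i j) (Mxe x ε i j) ε ∧
      HasDerivWithinAt (fun t => Me t ε i j) (Mxe x ε i j) (Set.Icc 0 1) x) :
    -- (d/dε) Δ(ε) |_{ε=0} = ∫₀¹ G_q·q̊ + ∫₀¹ G_p·ẘ
    HasDerivAt (fun e : ℝ => (M 1 e 0 0 + M 1 e 1 1) / 2)
      ((∫ x in (0:ℝ)..1,
          (lam / 4 * (M 1 0 0 1 * ((M x 0 1 0) ^ 2 - (M x 0 0 0) ^ 2)
              + M 1 0 1 0 * ((M x 0 0 1) ^ 2 - (M x 0 1 1) ^ 2)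
              + 2 * ((M 1 0 0 0 - M 1 0 1 1) / 2)
                  * (M x 0 0 0 * M x 0 0 1 - M x 0 1 0 * M x 0 1 1))
            + 1 / (64 * lam) *
                (Complex.exp (-q x 0) *
                    (M 1 0 1 0 * (M x 0 0 1) ^ 2 - M 1 0 0 1 * (M x 0 0 0) ^ 2
                      + 2 * ((M 1 0 0 0 - M 1 0 1 1) / 2) * (M x 0 0 0 * M x 0 0 1))
                  + Complex.exp (q x 0) *
                    (M 1 0 0 1 * (M x 0 1 0) ^ 2 - M 1 0 1 0 * (M x 0 1 1) ^ 2
                      - 2 * ((M 1 0 0 0 - M 1 0 1 1) / 2) * (M x 0 1 0 * M x 0 1 1))))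
            * qe x)
        + ∫ x in (0:ℝ)..1,
            (1 / 4 * (-(M 1 0 0 1) * (M x 0 0 0 * M x 0 1 0)
                + M 1 0 1 0 * (M x 0 0 1 * M x 0 1 1)
                + ((M 1 0 0 0 - M 1 0 1 1) / 2)
                    * (M x 0 0 0 * M x 0 1 1 + M x 0 0 1 * M x 0 1 0)))
              * we x) 0 := by
  have h0I : (0:ℝ) ∈ Set.Icc (0:ℝ) 1 := ⟨le_refl 0, zero_le_one⟩
  have h1I : (1:ℝ) ∈ Set.Icc (0:ℝ) 1 := ⟨zero_le_one, le_refl 1⟩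
  -- continuity of sections at ε = 0
  have hsec : ∀ {f : ℝ → ℝ → ℂ}, ContinuousOn (fun p : ℝ × ℝ => f p.1 p.2)
      (Set.Icc (0:ℝ) 1 ×ˢ (Set.univ : Set ℝ)) → ContinuousOn (fun x => f x 0) (Set.Icc (0:ℝ) 1) := by
    intro f hf
    have hmap : ContinuousOn (fun x : ℝ => ((x, (0:ℝ)) : ℝ × ℝ)) (Set.Icc (0:ℝ) 1) :=
      (continuous_id.prodMk continuous_const).continuousOn
    exact hf.comp hmap (fun x hx => ⟨hx, trivial⟩)
  have hm00 : ContinuousOn (fun x => M x 0 0 0) (Set.Icc (0:ℝ) 1) := hsec (f := fun x e => M x e 0 0) (hM_cont 0 0)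
  have hm01 : ContinuousOn (fun x => M x 0 0 1) (Set.Icc (0:ℝ) 1) := hsec (f := fun x e => M x e 0 1) (hM_cont 0 1)
  have hm10 : ContinuousOn (fun x => M x 0 1 0) (Set.Icc (0:ℝ) 1) := hsec (f := fun x e => M x e 1 0) (hM_cont 1 0)
  have hm11 : ContinuousOn (fun x => M x 0 1 1) (Set.Icc (0:ℝ) 1) := hsec (f := fun x e => M x e 1 1) (hM_cont 1 1)
  have hq_c : ContinuousOn (fun x => q x 0) (Set.Icc (0:ℝ) 1) := hsec hq_cont
  have hexppos : ContinuousOn (fun x => Complex.exp (q x 0)) (Set.Icc (0:ℝ) 1) :=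
    Complex.continuous_exp.comp_continuousOn hq_c
  have hexpneg : ContinuousOn (fun x => Complex.exp (-q x 0)) (Set.Icc (0:ℝ) 1) :=
    Complex.continuous_exp.comp_continuousOn hq_c.neg
  -- `∂_ε M (0, 0) = 0` since `M(0, ε) = 1` for all `ε`
  have hMe00 : ∀ i j : Fin 2, Me 0 0 i j = 0 := by
    intro i j
    have h1 := hMe 0 0 h0I i j
    have h2 : (fun e => M 0 e i j) = fun _ => (1 : Matrix (Fin 2) (Fin 2) ℂ) i j :=
      funext fun e => by rw [hM0]
    rw [h2] at h1
    exact h1.unique (hasDerivAt_const _ _)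
  -- the ODE, written out entrywise
  have hMxentry : ∀ ε : ℝ, ∀ x ∈ Set.Icc (0:ℝ) 1,
      Mx x ε 0 0 = (w x ε + qx x ε) / 4 * M x ε 0 0
          + (lam - Complex.exp (q x ε) / (16 * lam)) * M x ε 1 0
      ∧ Mx x ε 0 1 = (w x ε + qx x ε) / 4 * M x ε 0 1
          + (lam - Complex.exp (q x ε) / (16 * lam)) * M x ε 1 1
      ∧ Mx x ε 1 0 = -(lam - Complex.exp (-q x ε) / (16 * lam)) * M x ε 0 0
          + -((w x ε + qx x ε) / 4) * M x ε 1 0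
      ∧ Mx x ε 1 1 = -(lam - Complex.exp (-q x ε) / (16 * lam)) * M x ε 0 1
          + -((w x ε + qx x ε) / 4) * M x ε 1 1 := by
    intro ε x hx
    have h := hODE ε x hx
    refine ⟨?_, ?_, ?_, ?_⟩ <;> rw [h] <;>
      simp [coeffMat, Matrix.mul_apply, Fin.sum_univ_two] <;> ring
  -- the ε-derivative of the ODE at ε = 0 (mixed partial)
  have hMxe : ∀ x ∈ Set.Icc (0:ℝ) 1,
      Mxe x 0 0 0 = ((we x + qex x) / 4 * M x 0 0 0 + (w x 0 + qx x 0) / 4 * Me x 0 0 0)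
          + (-(Complex.exp (q x 0) * qe x / (16 * lam)) * M x 0 1 0
             + (lam - Complex.exp (q x 0) / (16 * lam)) * Me x 0 1 0)
      ∧ Mxe x 0 0 1 = ((we x + qex x) / 4 * M x 0 0 1 + (w x 0 + qx x 0) / 4 * Me x 0 0 1)
          + (-(Complex.exp (q x 0) * qe x / (16 * lam)) * M x 0 1 1
             + (lam - Complex.exp (q x 0) / (16 * lam)) * Me x 0 1 1)
      ∧ Mxe x 0 1 0 = (-(-(Complex.exp (-q x 0) * -qe x / (16 * lam))) * M x 0 0 0
             + -(lam - Complex.exp (-q x 0) / (16 * lam)) * Me x 0 0 0)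
          + (-((we x + qex x) / 4) * M x 0 1 0 + -((w x 0 + qx x 0) / 4) * Me x 0 1 0)
      ∧ Mxe x 0 1 1 = (-(-(Complex.exp (-q x 0) * -qe x / (16 * lam))) * M x 0 0 1
             + -(lam - Complex.exp (-q x 0) / (16 * lam)) * Me x 0 0 1)
          + (-((we x + qex x) / 4) * M x 0 1 1 + -((w x 0 + qx x 0) / 4) * Me x 0 1 1) := by
    intro x hx
    have hA : HasDerivAt (fun e => (w x e + qx x e) / 4) ((we x + qex x) / 4) 0 :=
      ((hwe x hx).add (hq_mixed x hx).2).div_const 4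
    have hB : HasDerivAt (fun e => lam - Complex.exp (q x e) / (16 * lam))
        (-(Complex.exp (q x 0) * qe x / (16 * lam))) 0 :=
      HasDerivAt.const_sub lam (((hqe x hx).cexp).div_const (16 * lam))
    have hC : HasDerivAt (fun e => -(lam - Complex.exp (-q x e) / (16 * lam)))
        (-(-(Complex.exp (-q x 0) * -qe x / (16 * lam)))) 0 :=
      (HasDerivAt.const_sub lam (((hqe x hx).neg.cexp).div_const (16 * lam))).neg
    have hD : HasDerivAt (fun e => -((w x e + qx x e) / 4)) (-((we x + qex x) / 4)) 0 := hA.neg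
    refine ⟨?_, ?_, ?_, ?_⟩
    · have hfun : (fun e => Mx x e 0 0) = fun e => (w x e + qx x e) / 4 * M x e 0 0
          + (lam - Complex.exp (q x e) / (16 * lam)) * M x e 1 0 :=
        funext fun e => (hMxentry e x hx).1
      have hmix := (hM_mixed 0 x hx 0 0).1
      rw [hfun] at hmix
      exact hmix.unique ((hA.mul (hMe 0 x hx 0 0)).add (hB.mul (hMe 0 x hx 1 0)))
    · have hfun : (fun e => Mx x e 0 1) = fun e => (w x e + qx x e) / 4 * M x e 0 1
          + (lam - Complex.exp (q x e) / (16 * lam)) * M x e 1 1 :=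
        funext fun e => (hMxentry e x hx).2.1
      have hmix := (hM_mixed 0 x hx 0 1).1
      rw [hfun] at hmix
      exact hmix.unique ((hA.mul (hMe 0 x hx 0 1)).add (hB.mul (hMe 0 x hx 1 1)))
    · have hfun : (fun e => Mx x e 1 0) = fun e => -(lam - Complex.exp (-q x e) / (16 * lam)) * M x e 0 0
          + -((w x e + qx x e) / 4) * M x e 1 0 :=
        funext fun e => (hMxentry e x hx).2.2.1
      have hmix := (hM_mixed 0 x hx 1 0).1
      rw [hfun] at hmix
      exact hmix.unique ((hC.mul (hMe 0 x hx 0 0)).add (hD.mul (hMe 0 x hx 1 0)))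
    · have hfun : (fun e => Mx x e 1 1) = fun e => -(lam - Complex.exp (-q x e) / (16 * lam)) * M x e 0 1
          + -((w x e + qx x e) / 4) * M x e 1 1 :=
        funext fun e => (hMxentry e x hx).2.2.2
      have hmix := (hM_mixed 0 x hx 1 1).1
      rw [hfun] at hmix
      exact hmix.unique ((hC.mul (hMe 0 x hx 0 1)).add (hD.mul (hMe 0 x hx 1 1)))
  -- `det M(1, 0) = 1` (Liouville / Wronskian identity)
  have hdet1 : M 1 0 0 0 * M 1 0 1 1 - M 1 0 0 1 * M 1 0 1 0 = 1 := by
    have hder : ∀ x ∈ Set.Ico (0:ℝ) 1,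
        HasDerivWithinAt (fun t => M t 0 0 0 * M t 0 1 1 - M t 0 0 1 * M t 0 1 0) 0 (Set.Ici x) x := by
      intro x hx
      have hx' : x ∈ Set.Icc (0:ℝ) 1 := ⟨hx.1, hx.2.le⟩
      have H : HasDerivWithinAt (fun t => M t 0 0 0 * M t 0 1 1 - M t 0 0 1 * M t 0 1 0)
          ((Mx x 0 0 0 * M x 0 1 1 + M x 0 0 0 * Mx x 0 1 1)
            - (Mx x 0 0 1 * M x 0 1 0 + M x 0 0 1 * Mx x 0 1 0)) (Set.Icc (0:ℝ) 1) x :=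
        ((hMx 0 x hx' 0 0).mul (hMx 0 x hx' 1 1)).sub ((hMx 0 x hx' 0 1).mul (hMx 0 x hx' 1 0))
      have hz : (Mx x 0 0 0 * M x 0 1 1 + M x 0 0 0 * Mx x 0 1 1)
          - (Mx x 0 0 1 * M x 0 1 0 + M x 0 0 1 * Mx x 0 1 0) = 0 := by
        obtain ⟨hp1, hp2, hp3, hp4⟩ := hMxentry 0 x hx'
        rw [hp1, hp2, hp3, hp4]; ring
      rw [hz] at H
      exact H.mono_of_mem_nhdsWithin (Icc_mem_nhdsGE_of_mem hx)
    have hcont : ContinuousOn (fun t => M t 0 0 0 * M t 0 1 1 - M t 0 0 1 * M t 0 1 0)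
        (Set.Icc (0:ℝ) 1) := fun x hx =>
      (((hMx 0 x hx 0 0).mul (hMx 0 x hx 1 1)).sub
        ((hMx 0 x hx 0 1).mul (hMx 0 x hx 1 0))).continuousWithinAt
    have h1 := constant_of_has_deriv_right_zero hcont hder 1 ⟨zero_le_one, le_refl 1⟩
    simpa [hM0, Matrix.one_apply] using h1
  -- the main integral identity
  have main : (∫ x in (0:ℝ)..1,
          (lam / 4 * (M 1 0 0 1 * ((M x 0 1 0) ^ 2 - (M x 0 0 0) ^ 2)
              + M 1 0 1 0 * ((M x 0 0 1) ^ 2 - (M x 0 1 1) ^ 2)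
              + 2 * ((M 1 0 0 0 - M 1 0 1 1) / 2)
                  * (M x 0 0 0 * M x 0 0 1 - M x 0 1 0 * M x 0 1 1))
            + 1 / (64 * lam) *
                (Complex.exp (-q x 0) *
                    (M 1 0 1 0 * (M x 0 0 1) ^ 2 - M 1 0 0 1 * (M x 0 0 0) ^ 2
                      + 2 * ((M 1 0 0 0 - M 1 0 1 1) / 2) * (M x 0 0 0 * M x 0 0 1))
                  + Complex.exp (q x 0) *
                    (M 1 0 0 1 * (M x 0 1 0) ^ 2 - M 1 0 1 0 * (M x 0 1 1) ^ 2
                      - 2 * ((M 1 0 0 0 - M 1 0 1 1) / 2) * (M x 0 1 0 * M x 0 1 1))))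
            * qe x)
        + (∫ x in (0:ℝ)..1,
            (1 / 4 * (-(M 1 0 0 1) * (M x 0 0 0 * M x 0 1 0)
                + M 1 0 1 0 * (M x 0 0 1 * M x 0 1 1)
                + ((M 1 0 0 0 - M 1 0 1 1) / 2)
                    * (M x 0 0 0 * M x 0 1 1 + M x 0 0 1 * M x 0 1 0)))
              * we x) = (Me 1 0 0 0 + Me 1 0 1 1) / 2 := by
    set Fq : ℝ → ℂ := fun x =>
          (lam / 4 * (M 1 0 0 1 * ((M x 0 1 0) ^ 2 - (M x 0 0 0) ^ 2)
              + M 1 0 1 0 * ((M x 0 0 1) ^ 2 - (M x 0 1 1) ^ 2)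
              + 2 * ((M 1 0 0 0 - M 1 0 1 1) / 2)
                  * (M x 0 0 0 * M x 0 0 1 - M x 0 1 0 * M x 0 1 1))
            + 1 / (64 * lam) *
                (Complex.exp (-q x 0) *
                    (M 1 0 1 0 * (M x 0 0 1) ^ 2 - M 1 0 0 1 * (M x 0 0 0) ^ 2
                      + 2 * ((M 1 0 0 0 - M 1 0 1 1) / 2) * (M x 0 0 0 * M x 0 0 1))
                  + Complex.exp (q x 0) *
                    (M 1 0 0 1 * (M x 0 1 0) ^ 2 - M 1 0 1 0 * (M x 0 1 1) ^ 2
                      - 2 * ((M 1 0 0 0 - M 1 0 1 1) / 2) * (M x 0 1 0 * M x 0 1 1))))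
            * qe x with hFq_def
    set Fp : ℝ → ℂ := fun x =>
            (1 / 4 * (-(M 1 0 0 1) * (M x 0 0 0 * M x 0 1 0)
                + M 1 0 1 0 * (M x 0 0 1 * M x 0 1 1)
                + ((M 1 0 0 0 - M 1 0 1 1) / 2)
                    * (M x 0 0 0 * M x 0 1 1 + M x 0 0 1 * M x 0 1 0)))
              * we x with hFp_def
    set g : ℝ → ℂ := fun x =>
        ((M 1 0 0 0 - M 1 0 1 1) * (M x 0 0 0 * M x 0 1 1 + M x 0 0 1 * M x 0 1 0)
          - 2 * M 1 0 0 1 * (M x 0 0 0 * M x 0 1 0)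
          + 2 * M 1 0 1 0 * (M x 0 0 1 * M x 0 1 1)) / 4 with hg_def
    set χ : ℝ → ℂ := fun x =>
        M 1 0 0 0 * (M x 0 1 1 * Me x 0 0 0 - M x 0 0 1 * Me x 0 1 0)
        + M 1 0 0 1 * (M x 0 0 0 * Me x 0 1 0 - M x 0 1 0 * Me x 0 0 0)
        + M 1 0 1 0 * (M x 0 1 1 * Me x 0 0 1 - M x 0 0 1 * Me x 0 1 1)
        + M 1 0 1 1 * (M x 0 0 0 * Me x 0 1 1 - M x 0 1 0 * Me x 0 0 1)
        - g x * qe x with hχ_def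
    -- derivative of χ
    have hχd : ∀ x ∈ Set.Icc (0:ℝ) 1,
        HasDerivWithinAt χ (2 * Fq x + 2 * Fp x) (Set.Icc (0:ℝ) 1) x := by
      intro x hx
      obtain ⟨hp1, hp2, hp3, hp4⟩ := hMxentry 0 x hx
      obtain ⟨hz1, hz2, hz3, hz4⟩ := hMxe x hx
      have hm : ∀ i j : Fin 2, HasDerivWithinAt (fun t => M t 0 i j) (Mx x 0 i j)
          (Set.Icc (0:ℝ) 1) x := fun i j => hMx 0 x hx i j
      have he : ∀ i j : Fin 2, HasDerivWithinAt (fun t => Me t 0 i j) (Mxe x 0 i j)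
          (Set.Icc (0:ℝ) 1) x := fun i j => (hM_mixed 0 x hx i j).2
      have hqe' : HasDerivWithinAt qe (qex x) (Set.Icc (0:ℝ) 1) x := (hq_mixed x hx).1
      have H : HasDerivWithinAt (fun y =>
          M 1 0 0 0 * (M y 0 1 1 * Me y 0 0 0 - M y 0 0 1 * Me y 0 1 0)
          + M 1 0 0 1 * (M y 0 0 0 * Me y 0 1 0 - M y 0 1 0 * Me y 0 0 0)
          + M 1 0 1 0 * (M y 0 1 1 * Me y 0 0 1 - M y 0 0 1 * Me y 0 1 1)
          + M 1 0 1 1 * (M y 0 0 0 * Me y 0 1 1 - M y 0 1 0 * Me y 0 0 1)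
          - ((M 1 0 0 0 - M 1 0 1 1) * (M y 0 0 0 * M y 0 1 1 + M y 0 0 1 * M y 0 1 0)
              - 2 * M 1 0 0 1 * (M y 0 0 0 * M y 0 1 0)
              + 2 * M 1 0 1 0 * (M y 0 0 1 * M y 0 1 1)) / 4 * qe y)
          ((M 1 0 0 0 * ((Mx x 0 1 1 * Me x 0 0 0 + M x 0 1 1 * Mxe x 0 0 0)
              - (Mx x 0 0 1 * Me x 0 1 0 + M x 0 0 1 * Mxe x 0 1 0))
            + M 1 0 0 1 * ((Mx x 0 0 0 * Me x 0 1 0 + M x 0 0 0 * Mxe x 0 1 0)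
              - (Mx x 0 1 0 * Me x 0 0 0 + M x 0 1 0 * Mxe x 0 0 0))
            + M 1 0 1 0 * ((Mx x 0 1 1 * Me x 0 0 1 + M x 0 1 1 * Mxe x 0 0 1)
              - (Mx x 0 0 1 * Me x 0 1 1 + M x 0 0 1 * Mxe x 0 1 1))
            + M 1 0 1 1 * ((Mx x 0 0 0 * Me x 0 1 1 + M x 0 0 0 * Mxe x 0 1 1)
              - (Mx x 0 1 0 * Me x 0 0 1 + M x 0 1 0 * Mxe x 0 0 1)))
          - (((M 1 0 0 0 - M 1 0 1 1) * ((Mx x 0 0 0 * M x 0 1 1 + M x 0 0 0 * Mx x 0 1 1)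
                + (Mx x 0 0 1 * M x 0 1 0 + M x 0 0 1 * Mx x 0 1 0))
              - 2 * M 1 0 0 1 * (Mx x 0 0 0 * M x 0 1 0 + M x 0 0 0 * Mx x 0 1 0)
              + 2 * M 1 0 1 0 * (Mx x 0 0 1 * M x 0 1 1 + M x 0 0 1 * Mx x 0 1 1)) / 4 * qe x
            + ((M 1 0 0 0 - M 1 0 1 1) * (M x 0 0 0 * M x 0 1 1 + M x 0 0 1 * M x 0 1 0)
              - 2 * M 1 0 0 1 * (M x 0 0 0 * M x 0 1 0)
              + 2 * M 1 0 1 0 * (M x 0 0 1 * M x 0 1 1)) / 4 * qex x))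
          (Set.Icc (0:ℝ) 1) x :=
        (((((((hm 1 1).mul (he 0 0)).sub ((hm 0 1).mul (he 1 0))).const_mul (M 1 0 0 0)).add
          ((((hm 0 0).mul (he 1 0)).sub ((hm 1 0).mul (he 0 0))).const_mul (M 1 0 0 1))).add
          ((((hm 1 1).mul (he 0 1)).sub ((hm 0 1).mul (he 1 1))).const_mul (M 1 0 1 0))).add
          ((((hm 0 0).mul (he 1 1)).sub ((hm 1 0).mul (he 0 1))).const_mul (M 1 0 1 1))).sub
          ((((((((hm 0 0).mul (hm 1 1)).add ((hm 0 1).mul (hm 1 0))).const_mul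
                (M 1 0 0 0 - M 1 0 1 1)).sub
              (((hm 0 0).mul (hm 1 0)).const_mul (2 * M 1 0 0 1))).add
              (((hm 0 1).mul (hm 1 1)).const_mul (2 * M 1 0 1 0))).div_const 4).mul hqe')
      have hval : 2 * Fq x + 2 * Fp x =
          (M 1 0 0 0 * ((Mx x 0 1 1 * Me x 0 0 0 + M x 0 1 1 * Mxe x 0 0 0)
              - (Mx x 0 0 1 * Me x 0 1 0 + M x 0 0 1 * Mxe x 0 1 0))
            + M 1 0 0 1 * ((Mx x 0 0 0 * Me x 0 1 0 + M x 0 0 0 * Mxe x 0 1 0)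
              - (Mx x 0 1 0 * Me x 0 0 0 + M x 0 1 0 * Mxe x 0 0 0))
            + M 1 0 1 0 * ((Mx x 0 1 1 * Me x 0 0 1 + M x 0 1 1 * Mxe x 0 0 1)
              - (Mx x 0 0 1 * Me x 0 1 1 + M x 0 0 1 * Mxe x 0 1 1))
            + M 1 0 1 1 * ((Mx x 0 0 0 * Me x 0 1 1 + M x 0 0 0 * Mxe x 0 1 1)
              - (Mx x 0 1 0 * Me x 0 0 1 + M x 0 1 0 * Mxe x 0 0 1)))
          - (((M 1 0 0 0 - M 1 0 1 1) * ((Mx x 0 0 0 * M x 0 1 1 + M x 0 0 0 * Mx x 0 1 1)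
                + (Mx x 0 0 1 * M x 0 1 0 + M x 0 0 1 * Mx x 0 1 0))
              - 2 * M 1 0 0 1 * (Mx x 0 0 0 * M x 0 1 0 + M x 0 0 0 * Mx x 0 1 0)
              + 2 * M 1 0 1 0 * (Mx x 0 0 1 * M x 0 1 1 + M x 0 0 1 * Mx x 0 1 1)) / 4 * qe x
            + ((M 1 0 0 0 - M 1 0 1 1) * (M x 0 0 0 * M x 0 1 1 + M x 0 0 1 * M x 0 1 0)
              - 2 * M 1 0 0 1 * (M x 0 0 0 * M x 0 1 0)
              + 2 * M 1 0 1 0 * (M x 0 0 1 * M x 0 1 1)) / 4 * qex x) := by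
        simp only [hFq_def, hFp_def]
        rw [hp1, hp2, hp3, hp4, hz1, hz2, hz3, hz4]
        ring
      simp only [hχ_def, hg_def]
      rw [hval]
      exact H
    have hχcont : ContinuousOn χ (Set.Icc (0:ℝ) 1) := fun x hx => (hχd x hx).continuousWithinAt
    -- continuity of the integrands
    have hFq_cont : ContinuousOn Fq (Set.Icc (0:ℝ) 1) := by
      rw [hFq_def]
      exact ((continuousOn_const.mul
          (((continuousOn_const.mul ((hm10.pow 2).sub (hm00.pow 2))).add
            (continuousOn_const.mul ((hm01.pow 2).sub (hm11.pow 2)))).add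
            (continuousOn_const.mul ((hm00.mul hm01).sub (hm10.mul hm11))))).add
        (continuousOn_const.mul
          ((hexpneg.mul (((continuousOn_const.mul (hm01.pow 2)).sub
              (continuousOn_const.mul (hm00.pow 2))).add
              (continuousOn_const.mul (hm00.mul hm01)))).add
            (hexppos.mul (((continuousOn_const.mul (hm10.pow 2)).sub
              (continuousOn_const.mul (hm11.pow 2))).sub
              (continuousOn_const.mul (hm10.mul hm11))))))).mul hqe_cont
    have hFp_cont : ContinuousOn Fp (Set.Icc (0:ℝ) 1) := by
      rw [hFp_def]
      exact (continuousOn_const.mul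
          (((continuousOn_const.mul (hm00.mul hm10)).add
            (continuousOn_const.mul (hm01.mul hm11))).add
            (continuousOn_const.mul ((hm00.mul hm11).add (hm01.mul hm10))))).mul hwe_cont
    have hFq_int : IntervalIntegrable Fq volume 0 1 := by
      apply ContinuousOn.intervalIntegrable
      rwa [Set.uIcc_of_le zero_le_one]
    have hFp_int : IntervalIntegrable Fp volume 0 1 := by
      apply ContinuousOn.intervalIntegrable
      rwa [Set.uIcc_of_le zero_le_one]
    have hint : IntervalIntegrable (fun y => 2 * Fq y + 2 * Fp y) volume 0 1 :=
      (hFq_int.const_mul 2).add (hFp_int.const_mul 2)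
    have hFTC : (∫ y in (0:ℝ)..1, (2 * Fq y + 2 * Fp y)) = χ 1 - χ 0 :=
      intervalIntegral.integral_eq_sub_of_hasDeriv_right_of_le zero_le_one hχcont
        (fun x hx => ((hχd x ⟨hx.1.le, hx.2.le⟩).hasDerivAt
          (Icc_mem_nhds hx.1 hx.2)).hasDerivWithinAt) hint
    have hbd : χ 1 - χ 0 = Me 1 0 0 0 + Me 1 0 1 1 := by
      simp only [hχ_def, hg_def, hM0, hMe00, Matrix.one_apply]
      norm_num
      rw [hqe_bc]
      linear_combination (Me 1 0 0 0 + Me 1 0 1 1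
        - (M 1 0 0 0 - M 1 0 1 1) * qe 0 / 4) * hdet1
    have hsplit : (∫ y in (0:ℝ)..1, (2 * Fq y + 2 * Fp y))
        = 2 * (∫ y in (0:ℝ)..1, Fq y) + 2 * (∫ y in (0:ℝ)..1, Fp y) := by
      rw [intervalIntegral.integral_add (hFq_int.const_mul 2) (hFp_int.const_mul 2),
        intervalIntegral.integral_const_mul, intervalIntegral.integral_const_mul]
    have hfin := hsplit.symm.trans (hFTC.trans hbd)
    linear_combination hfin / 2
  rw [main]
  exact ((hMe 0 1 h1I 0 0).add (hMe 0 1 h1I 1 1)).div_const 2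
end
end

section
/- Gradients of the discriminant and anti-discriminant at the zero potential (Lemma 3.2(iii), directional form). Fix λ ∈ ℂ* and set ω := λ − 1/(16λ). Let q(x,ε), w(x,ε) be a one-parameter family of data with q(·,0) ≡ 0 and w(·,0) ≡ 0 and with q̊(1) = q̊(0), and let M(x,ε) be the fundamental solution of the reduced sinh-Gordon equation with parameter λ and data (q(·,ε), w(·,ε)), jointly continuously differentiable in (x,ε) with equal mixed second partials. Let Δ(ε) := (1/2)(M₁₁(1,ε) + M₂₂(1,ε)) and δ(ε) := (1/2)(M₁₁(1,ε) − M₂₂(1,ε)). Then (d/dε)Δ(ε)|_{ε=0} = 0, and (d/dε)δ(ε)|_{ε=0} = ∫₀¹ (1/2)(λ + 1/(16λ))·(cos(ω)·sin(2ωx) − sin(ω)·cos(2ωx))·q̊(x) dx + ∫₀¹ (1/4)·(cos(ω)·cos(2ωx) + sin(ω)·sin(2ωx))·ẘ(x) dx. -/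
open MeasureTheory

noncomputable section

section Helpers
open Set

private lemma myconst {f : ℝ → ℂ} (hc : ContinuousOn f (Icc 0 1))
    (hd : ∀ x ∈ Icc (0:ℝ) 1, HasDerivWithinAt f 0 (Icc 0 1) x) :
    ∀ x ∈ Icc (0:ℝ) 1, f x = f 0 := by
  apply constant_of_has_deriv_right_zero hc
  intro x hx
  have h1 : HasDerivWithinAt f 0 (Icc x 1) x :=
    (hd x (Ico_subset_Icc_self hx)).mono (Icc_subset_Icc hx.1 le_rfl)
  rw [← Ici_inter_Iic] at h1
  exact (hasDerivWithinAt_inter (Iic_mem_nhds hx.2)).mp h1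

private lemma myftc {f g : ℝ → ℂ} (hc : ContinuousOn f (Icc 0 1))
    (hd : ∀ x ∈ Icc (0:ℝ) 1, HasDerivWithinAt f (g x) (Icc 0 1) x)
    (hg : ContinuousOn g (Icc 0 1)) :
    ∫ x in (0:ℝ)..1, g x = f 1 - f 0 := by
  apply intervalIntegral.integral_eq_sub_of_hasDeriv_right_of_le zero_le_one hc
  · intro x hx
    exact ((hd x (Ioo_subset_Icc_self hx)).hasDerivAt
      (Icc_mem_nhds hx.1 hx.2)).hasDerivWithinAt
  · exact (hg.mono (by rw [uIcc_of_le zero_le_one])).intervalIntegrable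

private lemma hccos (a : ℂ) (x : ℝ) :
    HasDerivAt (fun t : ℝ => Complex.cos (a * t)) (-(a * Complex.sin (a * x))) x := by
  have h1 : HasDerivAt (fun t : ℝ => a * (t:ℂ)) a x := by
    simpa using (Complex.ofRealCLM.hasDerivAt (x := x)).const_mul a
  have := (Complex.hasDerivAt_cos (a * x)).scomp x h1
  simpa [mul_comm, Function.comp_def] using this

private lemma hcsin (a : ℂ) (x : ℝ) :
    HasDerivAt (fun t : ℝ => Complex.sin (a * t)) (a * Complex.cos (a * x)) x := by
  have h1 : HasDerivAt (fun t : ℝ => a * (t:ℂ)) a x := by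
    simpa using (Complex.ofRealCLM.hasDerivAt (x := x)).const_mul a
  have := (Complex.hasDerivAt_sin (a * x)).scomp x h1
  simpa [mul_comm, Function.comp_def] using this

private lemma ccont (a : ℂ) : Continuous (fun t : ℝ => Complex.cos (a * t)) :=
  Complex.continuous_cos.comp (continuous_const.mul Complex.continuous_ofReal)

private lemma scont (a : ℂ) : Continuous (fun t : ℝ => Complex.sin (a * t)) :=
  Complex.continuous_sin.comp (continuous_const.mul Complex.continuous_ofReal)

end Helpers

/-- **Gradients of the discriminant and anti-discriminant at the zero potential**
(Lemma 3.2(iii), directional form). -/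
theorem gradient_of_discriminant_at_zero_potential
    (lam : ℂ) (hlam : lam ≠ 0)
    (q w qx : ℝ → ℝ → ℂ) (qe we qex : ℝ → ℂ)
    (M Mx Me Mxe : ℝ → ℝ → Matrix (Fin 2) (Fin 2) ℂ)
    -- the family passes through the zero potential at ε = 0
    (hq0 : ∀ x ∈ Set.Icc (0:ℝ) 1, q x 0 = 0)
    (hw0 : ∀ x ∈ Set.Icc (0:ℝ) 1, w x 0 = 0)
    -- regularity of the data `q(·,ε)` (C¹) and `w(·,ε)` (continuous), jointly in `(x,ε)`
    (hq_cont : ContinuousOn (fun p : ℝ × ℝ => q p.1 p.2)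
      (Set.Icc (0:ℝ) 1 ×ˢ (Set.univ : Set ℝ)))
    (hqx : ∀ ε : ℝ, ∀ x ∈ Set.Icc (0:ℝ) 1,
      HasDerivWithinAt (fun t => q t ε) (qx x ε) (Set.Icc 0 1) x)
    (hqx_cont : ContinuousOn (fun p : ℝ × ℝ => qx p.1 p.2)
      (Set.Icc (0:ℝ) 1 ×ˢ (Set.univ : Set ℝ)))
    (hw_cont : ContinuousOn (fun p : ℝ × ℝ => w p.1 p.2)
      (Set.Icc (0:ℝ) 1 ×ˢ (Set.univ : Set ℝ)))
    -- directional derivatives `q̊`, `ẘ` of the data at `ε = 0`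
    (hqe : ∀ x ∈ Set.Icc (0:ℝ) 1, HasDerivAt (fun e => q x e) (qe x) 0)
    (hwe : ∀ x ∈ Set.Icc (0:ℝ) 1, HasDerivAt (fun e => w x e) (we x) 0)
    (hqe_cont : ContinuousOn qe (Set.Icc 0 1))
    (hwe_cont : ContinuousOn we (Set.Icc 0 1))
    (hq_mixed : ∀ x ∈ Set.Icc (0:ℝ) 1,
      HasDerivWithinAt qe (qex x) (Set.Icc 0 1) x ∧
      HasDerivAt (fun e => qx x e) (qex x) 0)
    -- the boundary condition `q̊(1) = q̊(0)`
    (hqe_bc : qe 1 = qe 0)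
    -- `M(·,ε)` is the fundamental solution for each `ε`
    (hM0 : ∀ ε : ℝ, M 0 ε = 1)
    (hMx : ∀ ε : ℝ, ∀ x ∈ Set.Icc (0:ℝ) 1, ∀ i j : Fin 2,
      HasDerivWithinAt (fun t => M t ε i j) (Mx x ε i j) (Set.Icc 0 1) x)
    (hODE : ∀ ε : ℝ, ∀ x ∈ Set.Icc (0:ℝ) 1,
      Mx x ε = coeffMat lam (w x ε + qx x ε) (q x ε) * M x ε)
    -- `M`, `∂ₓM`, `∂_εM` exist and are continuous in `(x,ε)`
    (hM_cont : ∀ i j : Fin 2, ContinuousOn (fun p : ℝ × ℝ => M p.1 p.2 i j)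
      (Set.Icc (0:ℝ) 1 ×ˢ (Set.univ : Set ℝ)))
    (hMx_cont : ∀ i j : Fin 2, ContinuousOn (fun p : ℝ × ℝ => Mx p.1 p.2 i j)
      (Set.Icc (0:ℝ) 1 ×ˢ (Set.univ : Set ℝ)))
    (hMe : ∀ ε : ℝ, ∀ x ∈ Set.Icc (0:ℝ) 1, ∀ i j : Fin 2,
      HasDerivAt (fun e => M x e i j) (Me x ε i j) ε)
    (hMe_cont : ∀ i j : Fin 2, ContinuousOn (fun p : ℝ × ℝ => Me p.1 p.2 i j)
      (Set.Icc (0:ℝ) 1 ×ˢ (Set.univ : Set ℝ)))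
    -- equal mixed second partials `∂ₓ∂_εM = ∂_ε∂ₓM`
    (hM_mixed : ∀ ε : ℝ, ∀ x ∈ Set.Icc (0:ℝ) 1, ∀ i j : Fin 2,
      HasDerivAt (fun e => Mx x e i j) (Mxe x ε i j) ε ∧
      HasDerivWithinAt (fun t => Me t ε i j) (Mxe x ε i j) (Set.Icc 0 1) x) :
    -- (d/dε) Δ(ε) |_{ε=0} = 0
    HasDerivAt (fun e : ℝ => (M 1 e 0 0 + M 1 e 1 1) / 2) 0 0 ∧
    -- (d/dε) δ(ε) |_{ε=0} = ∫₀¹ ∂_q δ(λ,0)·q̊ + ∫₀¹ ∂_p δ(λ,0)·ẘ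
    HasDerivAt (fun e : ℝ => (M 1 e 0 0 - M 1 e 1 1) / 2)
      ((∫ x in (0:ℝ)..1,
          1 / 2 * (lam + 1 / (16 * lam)) *
            (Complex.cos (lam - 1 / (16 * lam)) *
                Complex.sin (2 * (lam - 1 / (16 * lam)) * (x : ℂ))
              - Complex.sin (lam - 1 / (16 * lam)) *
                  Complex.cos (2 * (lam - 1 / (16 * lam)) * (x : ℂ))) * qe x)
        + ∫ x in (0:ℝ)..1,
            1 / 4 *
              (Complex.cos (lam - 1 / (16 * lam)) *
                  Complex.cos (2 * (lam - 1 / (16 * lam)) * (x : ℂ))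
                + Complex.sin (lam - 1 / (16 * lam)) *
                    Complex.sin (2 * (lam - 1 / (16 * lam)) * (x : ℂ))) * we x) 0 := by
  have h01 : (0:ℝ) ∈ Set.Icc (0:ℝ) 1 := by norm_num
  have h11 : (1:ℝ) ∈ Set.Icc (0:ℝ) 1 := by norm_num
  set ω : ℂ := lam - 1/(16*lam) with hω
  -- q'(·,0) vanishes
  have hqx0 : ∀ x ∈ Set.Icc (0:ℝ) 1, qx x 0 = 0 := by
    intro x hx
    have h1 : HasDerivWithinAt (fun t => q t 0) (qx x 0) (Set.Icc 0 1) x := hqx 0 x hx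
    have h2 : HasDerivWithinAt (fun t => q t 0) 0 (Set.Icc (0:ℝ) 1) x :=
      (hasDerivWithinAt_const x _ (0:ℂ)).congr (fun t ht => hq0 t ht) (hq0 x hx)
    have hu := (uniqueDiffOn_Icc (zero_lt_one)) x hx
    rw [← h1.derivWithin hu, h2.derivWithin hu]
  -- continuity of slices
  have contM : ∀ i j : Fin 2, ContinuousOn (fun x => M x 0 i j) (Set.Icc 0 1) := by
    intro i j
    exact (hM_cont i j).comp
      ((continuous_id.prodMk continuous_const).continuousOn)
      (fun x hx => ⟨hx, Set.mem_univ _⟩)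
  have contMe : ∀ i j : Fin 2, ContinuousOn (fun x => Me x 0 i j) (Set.Icc 0 1) := by
    intro i j
    exact (hMe_cont i j).comp
      ((continuous_id.prodMk continuous_const).continuousOn)
      (fun x hx => ⟨hx, Set.mem_univ _⟩)
  -- the x-derivative of M(·,0)
  have hMxf : ∀ x ∈ Set.Icc (0:ℝ) 1, ∀ j : Fin 2,
      Mx x 0 0 j = ω * M x 0 1 j ∧ Mx x 0 1 j = -(ω * M x 0 0 j) := by
    intro x hx j
    have h := hODE 0 x hx
    rw [hq0 x hx, hw0 x hx, hqx0 x hx] at h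
    constructor
    · have := congrFun (congrFun h 0) j
      simp [coeffMat, Matrix.mul_apply, Fin.sum_univ_two, Complex.exp_zero] at this
      rw [this, hω]; ring
    · have := congrFun (congrFun h 1) j
      simp [coeffMat, Matrix.mul_apply, Fin.sum_univ_two, Complex.exp_zero] at this
      rw [this, hω]; ring
  -- M(·,0) is the rotation matrix
  have hME : ∀ x ∈ Set.Icc (0:ℝ) 1,
      M x 0 0 0 = Complex.cos (ω*x) ∧ M x 0 0 1 = Complex.sin (ω*x) ∧
      M x 0 1 0 = -Complex.sin (ω*x) ∧ M x 0 1 1 = Complex.cos (ω*x) := by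
    have key : ∀ j : Fin 2, ∀ x ∈ Set.Icc (0:ℝ) 1,
        M x 0 0 j = (1 : Matrix (Fin 2) (Fin 2) ℂ) 0 j * Complex.cos (ω*x)
          + (1 : Matrix (Fin 2) (Fin 2) ℂ) 1 j * Complex.sin (ω*x) ∧
        M x 0 1 j = -((1 : Matrix (Fin 2) (Fin 2) ℂ) 0 j) * Complex.sin (ω*x)
          + (1 : Matrix (Fin 2) (Fin 2) ℂ) 1 j * Complex.cos (ω*x) := by
      intro j
      have hU : ∀ x ∈ Set.Icc (0:ℝ) 1,
          M x 0 0 j * Complex.cos (ω*x) - M x 0 1 j * Complex.sin (ω*x)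
            = (1 : Matrix (Fin 2) (Fin 2) ℂ) 0 j := by
        have hconst := myconst (f := fun x =>
            M x 0 0 j * Complex.cos (ω*x) - M x 0 1 j * Complex.sin (ω*x))
          (((contM 0 j).mul (ccont ω).continuousOn).sub
            ((contM 1 j).mul (scont ω).continuousOn))
          (by
            intro x hx
            have hraw := (((hMx 0 x hx 0 j).mul (hccos ω x).hasDerivWithinAt).sub
              ((hMx 0 x hx 1 j).mul (hcsin ω x).hasDerivWithinAt))
            have he : Mx x 0 0 j * Complex.cos (ω*x) + M x 0 0 j * -(ω * Complex.sin (ω*x))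
                - (Mx x 0 1 j * Complex.sin (ω*x) + M x 0 1 j * (ω * Complex.cos (ω*x)))
                = 0 := by
              rw [(hMxf x hx j).1, (hMxf x hx j).2]; ring
            exact he ▸ hraw)
        intro x hx
        have h := hconst x hx
        simp only [hM0, Complex.ofReal_zero, mul_zero, Complex.cos_zero, Complex.sin_zero,
          mul_one, sub_zero] at h
        exact h
      have hW : ∀ x ∈ Set.Icc (0:ℝ) 1,
          M x 0 0 j * Complex.sin (ω*x) + M x 0 1 j * Complex.cos (ω*x)
            = (1 : Matrix (Fin 2) (Fin 2) ℂ) 1 j := by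
        have hconst := myconst (f := fun x =>
            M x 0 0 j * Complex.sin (ω*x) + M x 0 1 j * Complex.cos (ω*x))
          (((contM 0 j).mul (scont ω).continuousOn).add
            ((contM 1 j).mul (ccont ω).continuousOn))
          (by
            intro x hx
            have hraw := (((hMx 0 x hx 0 j).mul (hcsin ω x).hasDerivWithinAt).add
              ((hMx 0 x hx 1 j).mul (hccos ω x).hasDerivWithinAt))
            have he : Mx x 0 0 j * Complex.sin (ω*x) + M x 0 0 j * (ω * Complex.cos (ω*x))
                + (Mx x 0 1 j * Complex.cos (ω*x) + M x 0 1 j * -(ω * Complex.sin (ω*x)))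
                = 0 := by
              rw [(hMxf x hx j).1, (hMxf x hx j).2]; ring
            exact he ▸ hraw)
        intro x hx
        have h := hconst x hx
        simp only [hM0, Complex.ofReal_zero, mul_zero, Complex.cos_zero, Complex.sin_zero,
          mul_one, zero_add] at h
        exact h
      intro x hx
      have pyth := Complex.sin_sq_add_cos_sq (ω*x)
      constructor
      · linear_combination Complex.cos (ω*(x:ℂ)) * (hU x hx) + Complex.sin (ω*(x:ℂ)) * (hW x hx)
          - M x 0 0 j * pyth
      · linear_combination (-Complex.sin (ω*(x:ℂ))) * (hU x hx) + Complex.cos (ω*(x:ℂ)) * (hW x hx)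
          - M x 0 1 j * pyth
    intro x hx
    have k0 := key 0 x hx
    have k1 := key 1 x hx
    norm_num [Matrix.one_apply] at k0 k1
    exact ⟨k0.1, k1.1, by rw [k0.2], k1.2⟩
  -- Me(0,0) = 0
  have hMe0 : ∀ i j : Fin 2, Me 0 0 i j = 0 := by
    intro i j
    have h1 : HasDerivAt (fun e => M 0 e i j) (Me 0 0 i j) 0 := hMe 0 0 h01 i j
    have h2 : HasDerivAt (fun e => M 0 e i j) 0 0 := by
      have : (fun e => M 0 e i j) = fun _ => (1 : Matrix (Fin 2) (Fin 2) ℂ) i j := by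
        funext e; rw [hM0]
      rw [this]; exact hasDerivAt_const _ _
    exact h1.unique h2
  -- the mixed derivative formulas
  have hMxeTop : ∀ x ∈ Set.Icc (0:ℝ) 1, ∀ j : Fin 2,
      Mxe x 0 0 j = (we x + qex x)/4 * M x 0 0 j + (-(qe x)/(16*lam)) * M x 0 1 j
        + ω * Me x 0 1 j := by
    intro x hx j
    have hfun : (fun e => Mx x e 0 j) = fun e =>
        (w x e + qx x e)/4 * M x e 0 j
          + (lam - Complex.exp (q x e)/(16*lam)) * M x e 1 j := by
      funext e
      rw [hODE e x hx]
      simp [coeffMat, Matrix.mul_apply, Fin.sum_univ_two]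
    have h1 : HasDerivAt (fun e => (w x e + qx x e)/4) ((we x + qex x)/4) 0 :=
      ((hwe x hx).add (hq_mixed x hx).2).div_const 4
    have h3 : HasDerivAt (fun e => lam - Complex.exp (q x e)/(16*lam))
        (-(Complex.exp (q x 0) * qe x/(16*lam))) 0 :=
      (((hqe x hx).cexp).div_const (16*lam)).const_sub lam
    have htot := (h1.mul (hMe 0 x hx 0 j)).add (h3.mul (hMe 0 x hx 1 j))
    have huniq := (hM_mixed 0 x hx 0 j).1
    rw [hfun] at huniq
    have h := huniq.unique htot
    rw [h, hq0 x hx, hw0 x hx, hqx0 x hx, Complex.exp_zero, hω]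
    field_simp
    ring
  have hMxeBot : ∀ x ∈ Set.Icc (0:ℝ) 1, ∀ j : Fin 2,
      Mxe x 0 1 j = (-(qe x)/(16*lam)) * M x 0 0 j - (we x + qex x)/4 * M x 0 1 j
        - ω * Me x 0 0 j := by
    intro x hx j
    have hfun : (fun e => Mx x e 1 j) = fun e =>
        -(lam - Complex.exp (-(q x e))/(16*lam)) * M x e 0 j
          + -((w x e + qx x e)/4) * M x e 1 j := by
      funext e
      rw [hODE e x hx]
      simp [coeffMat, Matrix.mul_apply, Fin.sum_univ_two]
    have h1 : HasDerivAt (fun e => -((w x e + qx x e)/4)) (-((we x + qex x)/4)) 0 :=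
      (((hwe x hx).add (hq_mixed x hx).2).div_const 4).neg
    have h3 : HasDerivAt (fun e => -(lam - Complex.exp (-(q x e))/(16*lam)))
        (-(-(Complex.exp (-(q x 0)) * -(qe x)/(16*lam)))) 0 :=
      ((((hqe x hx).neg.cexp).div_const (16*lam)).const_sub lam).neg
    have htot := (h3.mul (hMe 0 x hx 0 j)).add (h1.mul (hMe 0 x hx 1 j))
    have huniq := (hM_mixed 0 x hx 1 j).1
    rw [hfun] at huniq
    have h := huniq.unique htot
    rw [h, hq0 x hx, hw0 x hx, hqx0 x hx]
    rw [show -(0:ℂ) = 0 by ring, Complex.exp_zero, hω]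
    field_simp
    ring
  -- x-derivatives of Me(·,0)
  have hVd : ∀ x ∈ Set.Icc (0:ℝ) 1, ∀ i j : Fin 2,
      HasDerivWithinAt (fun t => Me t 0 i j) (Mxe x 0 i j) (Set.Icc 0 1) x :=
    fun x hx i j => (hM_mixed 0 x hx i j).2
  -- double angle formulas
  have hc2 : ∀ x : ℝ, Complex.cos (2*ω*x)
      = Complex.cos (ω*x)^2 - Complex.sin (ω*x)^2 := by
    intro x
    rw [mul_assoc, Complex.cos_two_mul]
    linear_combination Complex.sin_sq_add_cos_sq (ω*(x:ℂ))
  have hs2 : ∀ x : ℝ, Complex.sin (2*ω*x)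
      = 2 * Complex.sin (ω*x) * Complex.cos (ω*x) := by
    intro x
    rw [mul_assoc, Complex.sin_two_mul]
  -- the trace part is conserved
  have hB1 : ∀ x ∈ Set.Icc (0:ℝ) 1,
      (Me x 0 0 0 + Me x 0 1 1) * Complex.cos (ω*x)
        + (Me x 0 0 1 - Me x 0 1 0) * Complex.sin (ω*x) = 0 := by
    have hconst := myconst (f := fun x => (Me x 0 0 0 + Me x 0 1 1) * Complex.cos (ω*x)
        + (Me x 0 0 1 - Me x 0 1 0) * Complex.sin (ω*x))
      ((((contMe 0 0).add (contMe 1 1)).mul (ccont ω).continuousOn).add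
        (((contMe 0 1).sub (contMe 1 0)).mul (scont ω).continuousOn))
      (by
        intro x hx
        obtain ⟨e00, e01, e10, e11⟩ := hME x hx
        have hraw := ((((hVd x hx 0 0).add (hVd x hx 1 1)).mul
            (hccos ω x).hasDerivWithinAt).add
          (((hVd x hx 0 1).sub (hVd x hx 1 0)).mul (hcsin ω x).hasDerivWithinAt))
        have he : (Mxe x 0 0 0 + Mxe x 0 1 1) * Complex.cos (ω*x)
            + (Me x 0 0 0 + Me x 0 1 1) * -(ω * Complex.sin (ω*x))
            + ((Mxe x 0 0 1 - Mxe x 0 1 0) * Complex.sin (ω*x)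
              + (Me x 0 0 1 - Me x 0 1 0) * (ω * Complex.cos (ω*x))) = 0 := by
          rw [hMxeTop x hx 0, hMxeTop x hx 1, hMxeBot x hx 0, hMxeBot x hx 1,
            e00, e01, e10, e11]
          ring
        exact he ▸ hraw)
    intro x hx
    have h := hconst x hx
    simp only [hMe0, Complex.ofReal_zero, mul_zero, Complex.cos_zero, Complex.sin_zero,
      mul_one, add_zero, zero_add, zero_mul, sub_zero, zero_sub, neg_zero] at h
    exact h
  have hB2 : ∀ x ∈ Set.Icc (0:ℝ) 1,
      -((Me x 0 0 0 + Me x 0 1 1) * Complex.sin (ω*x))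
        + (Me x 0 0 1 - Me x 0 1 0) * Complex.cos (ω*x) = 0 := by
    have hconst := myconst (f := fun x => -((Me x 0 0 0 + Me x 0 1 1) * Complex.sin (ω*x))
        + (Me x 0 0 1 - Me x 0 1 0) * Complex.cos (ω*x))
      (((((contMe 0 0).add (contMe 1 1)).mul (scont ω).continuousOn).neg).add
        (((contMe 0 1).sub (contMe 1 0)).mul (ccont ω).continuousOn))
      (by
        intro x hx
        obtain ⟨e00, e01, e10, e11⟩ := hME x hx
        have hraw := (((((hVd x hx 0 0).add (hVd x hx 1 1)).mul
            (hcsin ω x).hasDerivWithinAt).neg).add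
          (((hVd x hx 0 1).sub (hVd x hx 1 0)).mul (hccos ω x).hasDerivWithinAt))
        have he : -((Mxe x 0 0 0 + Mxe x 0 1 1) * Complex.sin (ω*x)
            + (Me x 0 0 0 + Me x 0 1 1) * (ω * Complex.cos (ω*x)))
            + ((Mxe x 0 0 1 - Mxe x 0 1 0) * Complex.cos (ω*x)
              + (Me x 0 0 1 - Me x 0 1 0) * -(ω * Complex.sin (ω*x))) = 0 := by
          rw [hMxeTop x hx 0, hMxeTop x hx 1, hMxeBot x hx 0, hMxeBot x hx 1,
            e00, e01, e10, e11]
          ring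
        exact he ▸ hraw)
    intro x hx
    have h := hconst x hx
    simp only [hMe0, Complex.ofReal_zero, mul_zero, Complex.cos_zero, Complex.sin_zero,
      mul_one, add_zero, zero_add, zero_mul, sub_zero, zero_sub, neg_zero] at h
    exact h
  -- trace of the variation vanishes at x = 1
  have hS1 : Me 1 0 0 0 + Me 1 0 1 1 = 0 := by
    have h1 := hB1 1 h11
    have h2 := hB2 1 h11
    have pyth1 := Complex.sin_sq_add_cos_sq (ω*((1:ℝ):ℂ))
    linear_combination Complex.cos (ω*((1:ℝ):ℂ)) * h1 - Complex.sin (ω*((1:ℝ):ℂ)) * h2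
      - (Me 1 0 0 0 + Me 1 0 1 1) * pyth1
  -- FTC for the anti-trace part
  have hA1d : ∀ x ∈ Set.Icc (0:ℝ) 1, HasDerivWithinAt
      (fun t => (Me t 0 0 0 - Me t 0 1 1) * Complex.cos (ω*t)
        - (Me t 0 0 1 + Me t 0 1 0) * Complex.sin (ω*t)
        - qe t * Complex.cos (2*ω*t)/2)
      (we x/2 * Complex.cos (2*ω*x)
        + (lam + 1/(16*lam)) * qe x * Complex.sin (2*ω*x)) (Set.Icc 0 1) x := by
    intro x hx
    obtain ⟨e00, e01, e10, e11⟩ := hME x hx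
    have hraw := ((((hVd x hx 0 0).sub (hVd x hx 1 1)).mul
        (hccos ω x).hasDerivWithinAt).sub
      (((hVd x hx 0 1).add (hVd x hx 1 0)).mul (hcsin ω x).hasDerivWithinAt)).sub
      (((hq_mixed x hx).1.mul (hccos (2*ω) x).hasDerivWithinAt).div_const 2)
    have he : (Mxe x 0 0 0 - Mxe x 0 1 1) * Complex.cos (ω*x)
        + (Me x 0 0 0 - Me x 0 1 1) * -(ω * Complex.sin (ω*x))
        - ((Mxe x 0 0 1 + Mxe x 0 1 0) * Complex.sin (ω*x)
          + (Me x 0 0 1 + Me x 0 1 0) * (ω * Complex.cos (ω*x)))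
        - (qex x * Complex.cos (2*ω*x) + qe x * -(2*ω * Complex.sin (2*ω*x)))/2
        = we x/2 * Complex.cos (2*ω*x)
          + (lam + 1/(16*lam)) * qe x * Complex.sin (2*ω*x) := by
      rw [hMxeTop x hx 0, hMxeTop x hx 1, hMxeBot x hx 0, hMxeBot x hx 1,
        e00, e01, e10, e11, hc2 x, hs2 x, hω]
      ring
    exact he ▸ hraw
  have hA2d : ∀ x ∈ Set.Icc (0:ℝ) 1, HasDerivWithinAt
      (fun t => (Me t 0 0 0 - Me t 0 1 1) * Complex.sin (ω*t)
        + (Me t 0 0 1 + Me t 0 1 0) * Complex.cos (ω*t)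
        - qe t * Complex.sin (2*ω*t)/2)
      (we x/2 * Complex.sin (2*ω*x)
        - (lam + 1/(16*lam)) * qe x * Complex.cos (2*ω*x)) (Set.Icc 0 1) x := by
    intro x hx
    obtain ⟨e00, e01, e10, e11⟩ := hME x hx
    have hraw := ((((hVd x hx 0 0).sub (hVd x hx 1 1)).mul
        (hcsin ω x).hasDerivWithinAt).add
      (((hVd x hx 0 1).add (hVd x hx 1 0)).mul (hccos ω x).hasDerivWithinAt)).sub
      (((hq_mixed x hx).1.mul (hcsin (2*ω) x).hasDerivWithinAt).div_const 2)
    have he : (Mxe x 0 0 0 - Mxe x 0 1 1) * Complex.sin (ω*x)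
        + (Me x 0 0 0 - Me x 0 1 1) * (ω * Complex.cos (ω*x))
        + ((Mxe x 0 0 1 + Mxe x 0 1 0) * Complex.cos (ω*x)
          + (Me x 0 0 1 + Me x 0 1 0) * -(ω * Complex.sin (ω*x)))
        - (qex x * Complex.sin (2*ω*x) + qe x * (2*ω * Complex.cos (2*ω*x)))/2
        = we x/2 * Complex.sin (2*ω*x)
          - (lam + 1/(16*lam)) * qe x * Complex.cos (2*ω*x) := by
      rw [hMxeTop x hx 0, hMxeTop x hx 1, hMxeBot x hx 0, hMxeBot x hx 1,
        e00, e01, e10, e11, hc2 x, hs2 x, hω]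
      ring
    exact he ▸ hraw
  have contg1 : ContinuousOn (fun x : ℝ => we x/2 * Complex.cos (2*ω*x)
      + (lam + 1/(16*lam)) * qe x * Complex.sin (2*ω*x)) (Set.Icc 0 1) :=
    ((hwe_cont.div_const 2).mul (ccont (2*ω)).continuousOn).add
      (((continuousOn_const.mul hqe_cont)).mul (scont (2*ω)).continuousOn)
  have contg2 : ContinuousOn (fun x : ℝ => we x/2 * Complex.sin (2*ω*x)
      - (lam + 1/(16*lam)) * qe x * Complex.cos (2*ω*x)) (Set.Icc 0 1) :=
    ((hwe_cont.div_const 2).mul (scont (2*ω)).continuousOn).sub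
      (((continuousOn_const.mul hqe_cont)).mul (ccont (2*ω)).continuousOn)
  have contA1 : ContinuousOn (fun t : ℝ => (Me t 0 0 0 - Me t 0 1 1) * Complex.cos (ω*t)
      - (Me t 0 0 1 + Me t 0 1 0) * Complex.sin (ω*t)
      - qe t * Complex.cos (2*ω*t)/2) (Set.Icc 0 1) :=
    ((((contMe 0 0).sub (contMe 1 1)).mul (ccont ω).continuousOn).sub
      (((contMe 0 1).add (contMe 1 0)).mul (scont ω).continuousOn)).sub
      ((hqe_cont.mul (ccont (2*ω)).continuousOn).div_const 2)
  have contA2 : ContinuousOn (fun t : ℝ => (Me t 0 0 0 - Me t 0 1 1) * Complex.sin (ω*t)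
      + (Me t 0 0 1 + Me t 0 1 0) * Complex.cos (ω*t)
      - qe t * Complex.sin (2*ω*t)/2) (Set.Icc 0 1) :=
    ((((contMe 0 0).sub (contMe 1 1)).mul (scont ω).continuousOn).add
      (((contMe 0 1).add (contMe 1 0)).mul (ccont ω).continuousOn)).sub
      ((hqe_cont.mul (scont (2*ω)).continuousOn).div_const 2)
  have hI1 := myftc contA1 hA1d contg1
  have hI2 := myftc contA2 hA2d contg2
  simp only [hMe0, Complex.ofReal_zero, Complex.ofReal_one, mul_zero, mul_one,
    Complex.cos_zero, Complex.sin_zero, zero_mul, sub_zero, zero_sub, add_zero,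
    zero_add, zero_div, neg_zero, sub_self] at hI1 hI2
  -- the value of the anti-trace variation at x = 1
  have hcc : Complex.cos ω = Complex.cos (2*ω) * Complex.cos ω
      + Complex.sin (2*ω) * Complex.sin ω := by
    have h := Complex.cos_sub (2*ω) ω
    rw [show 2*ω - ω = ω by ring] at h
    exact h
  have pyth1 := Complex.sin_sq_add_cos_sq ω
  have hD : Me 1 0 0 0 - Me 1 0 1 1
      = Complex.cos ω * (∫ x in (0:ℝ)..1, we x/2 * Complex.cos (2*ω*x)
          + (lam + 1/(16*lam)) * qe x * Complex.sin (2*ω*x))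
        + Complex.sin ω * (∫ x in (0:ℝ)..1, we x/2 * Complex.sin (2*ω*x)
          - (lam + 1/(16*lam)) * qe x * Complex.cos (2*ω*x)) := by
    linear_combination (-Complex.cos ω) * hI1 + (-Complex.sin ω) * hI2
      - (Me 1 0 0 0 - Me 1 0 1 1) * pyth1 - (qe 1/2) * hcc
      + (Complex.cos ω/2) * hqe_bc
  -- integrability of the target integrands
  have hint_g1 : IntervalIntegrable (fun x : ℝ => we x/2 * Complex.cos (2*ω*x)
      + (lam + 1/(16*lam)) * qe x * Complex.sin (2*ω*x)) volume 0 1 :=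
    (contg1.mono (by rw [Set.uIcc_of_le zero_le_one])).intervalIntegrable
  have hint_g2 : IntervalIntegrable (fun x : ℝ => we x/2 * Complex.sin (2*ω*x)
      - (lam + 1/(16*lam)) * qe x * Complex.cos (2*ω*x)) volume 0 1 :=
    (contg2.mono (by rw [Set.uIcc_of_le zero_le_one])).intervalIntegrable
  have hint_T1 : IntervalIntegrable (fun x : ℝ => 1/2 * (lam + 1/(16*lam)) *
      (Complex.cos ω * Complex.sin (2*ω*x) - Complex.sin ω * Complex.cos (2*ω*x)) * qe x)
      volume 0 1 := by
    apply ContinuousOn.intervalIntegrable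
    rw [Set.uIcc_of_le zero_le_one]
    exact (continuousOn_const.mul ((continuousOn_const.mul (scont (2*ω)).continuousOn).sub
      (continuousOn_const.mul (ccont (2*ω)).continuousOn))).mul hqe_cont
  have hint_T2 : IntervalIntegrable (fun x : ℝ => 1/4 *
      (Complex.cos ω * Complex.cos (2*ω*x) + Complex.sin ω * Complex.sin (2*ω*x)) * we x)
      volume 0 1 := by
    apply ContinuousOn.intervalIntegrable
    rw [Set.uIcc_of_le zero_le_one]
    exact (continuousOn_const.mul ((continuousOn_const.mul (ccont (2*ω)).continuousOn).add
      (continuousOn_const.mul (scont (2*ω)).continuousOn))).mul hwe_cont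
  constructor
  · have h := ((hMe 0 1 h11 0 0).add (hMe 0 1 h11 1 1)).div_const 2
    have hz : (Me 1 0 0 0 + Me 1 0 1 1)/2 = 0 := by rw [hS1]; norm_num
    exact hz ▸ h
  · have h := ((hMe 0 1 h11 0 0).sub (hMe 0 1 h11 1 1)).div_const 2
    have heq : (Me 1 0 0 0 - Me 1 0 1 1)/2
        = (∫ x in (0:ℝ)..1, 1/2 * (lam + 1/(16*lam)) *
            (Complex.cos ω * Complex.sin (2*ω*(x:ℂ))
              - Complex.sin ω * Complex.cos (2*ω*(x:ℂ))) * qe x)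
          + ∫ x in (0:ℝ)..1, 1/4 *
            (Complex.cos ω * Complex.cos (2*ω*(x:ℂ))
              + Complex.sin ω * Complex.sin (2*ω*(x:ℂ))) * we x := by
      rw [hD, ← intervalIntegral.integral_const_mul, ← intervalIntegral.integral_const_mul,
        ← intervalIntegral.integral_add (hint_g1.const_mul _) (hint_g2.const_mul _),
        ← intervalIntegral.integral_add hint_T1 hint_T2]
      rw [← intervalIntegral.integral_div]
      apply intervalIntegral.integral_congr
      intro x hx
      beta_reduce
      ring
    exact heq ▸ h
end
end

section
/- Gradient formula for eigenvalue-type parameters (Proposition 3.3, directional form). Let κ : (−1,1) → ℂ* be differentiable at 0, let q(x,ε), w(x,ε) be a one-parameter family of data, and let f(x,ε) = (f₁(x,ε), f₂(x,ε)) be a ℂ²-valued family, jointly continuously differentiable in (x,ε) with equal mixed second partials, such that for each ε the function f(·,ε) solves the reduced sinh-Gordon equation with spectral parameter κ(ε) and data (q(·,ε), w(·,ε)). Then, writing κ := κ(0), q := q(·,0), f := f(·,0), ∂̊f := ∂_εf(·,ε)|_{ε=0}, one has κ′(0) · ∫₀¹ [f₁²·(1 + e^{−q}/(16κ²)) + f₂²·(1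 + e^{q}/(16κ²))] dx = [∂̊f₁·f₂ − ∂̊f₂·f₁ − (1/2)·q̊·f₁f₂]₀¹ + ∫₀¹ ((κ/2)·(f₂² − f₁²) + (1/(32κ))·(f₂²·e^{q} − f₁²·e^{−q}))·q̊ dx − (1/2)·∫₀¹ f₁f₂·ẘ dx, where [g]₀¹ := g(1) − g(0). -/
open MeasureTheory

noncomputable section

set_option maxHeartbeats 2000000 in
/-- **Gradient formula for eigenvalue-type parameters**
(Proposition 3.3, directional form). -/
theorem gradient_formula_for_eigenvalue_parameters
    (kappa : ℝ → ℂ) (kappa' : ℂ)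
    (hkappa : ∀ ε ∈ Set.Ioo (-1 : ℝ) 1, kappa ε ≠ 0)
    (hkappa' : HasDerivAt kappa kappa' 0)
    (q w qx : ℝ → ℝ → ℂ) (qe we qex : ℝ → ℂ)
    (f1 f2 f1x f2x : ℝ → ℝ → ℂ) (f1e f2e f1xe f2xe : ℝ → ℂ)
    -- regularity of the data `q(·,ε)` (C¹) and `w(·,ε)` (continuous), jointly in `(x,ε)`
    (hqx : ∀ ε ∈ Set.Ioo (-1 : ℝ) 1, ∀ x ∈ Set.Icc (0:ℝ) 1,
      HasDerivWithinAt (fun t => q t ε) (qx x ε) (Set.Icc 0 1) x)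
    (hq_cont : ContinuousOn (fun p : ℝ × ℝ => q p.1 p.2)
      (Set.Icc (0:ℝ) 1 ×ˢ Set.Ioo (-1 : ℝ) 1))
    (hqx_cont : ContinuousOn (fun p : ℝ × ℝ => qx p.1 p.2)
      (Set.Icc (0:ℝ) 1 ×ˢ Set.Ioo (-1 : ℝ) 1))
    (hw_cont : ContinuousOn (fun p : ℝ × ℝ => w p.1 p.2)
      (Set.Icc (0:ℝ) 1 ×ˢ Set.Ioo (-1 : ℝ) 1))
    -- directional derivatives `q̊`, `ẘ` of the data at `ε = 0`
    (hqe : ∀ x ∈ Set.Icc (0:ℝ) 1, HasDerivAt (fun e => q x e) (qe x) 0)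
    (hwe : ∀ x ∈ Set.Icc (0:ℝ) 1, HasDerivAt (fun e => w x e) (we x) 0)
    (hqe_cont : ContinuousOn qe (Set.Icc 0 1))
    (hwe_cont : ContinuousOn we (Set.Icc 0 1))
    (hq_mixed : ∀ x ∈ Set.Icc (0:ℝ) 1,
      HasDerivWithinAt qe (qex x) (Set.Icc 0 1) x ∧
      HasDerivAt (fun e => qx x e) (qex x) 0)
    -- `f(·,ε)` solves the reduced equation with spectral parameter `κ(ε)`
    (hf1x : ∀ ε ∈ Set.Ioo (-1 : ℝ) 1, ∀ x ∈ Set.Icc (0:ℝ) 1,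
      HasDerivWithinAt (fun t => f1 t ε) (f1x x ε) (Set.Icc 0 1) x)
    (hf2x : ∀ ε ∈ Set.Ioo (-1 : ℝ) 1, ∀ x ∈ Set.Icc (0:ℝ) 1,
      HasDerivWithinAt (fun t => f2 t ε) (f2x x ε) (Set.Icc 0 1) x)
    (hODE1 : ∀ ε ∈ Set.Ioo (-1 : ℝ) 1, ∀ x ∈ Set.Icc (0:ℝ) 1,
      f1x x ε = (w x ε + qx x ε) / 4 * f1 x ε
        + (kappa ε - Complex.exp (q x ε) / (16 * kappa ε)) * f2 x ε)
    (hODE2 : ∀ ε ∈ Set.Ioo (-1 : ℝ) 1, ∀ x ∈ Set.Icc (0:ℝ) 1,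
      f2x x ε = -(kappa ε - Complex.exp (-q x ε) / (16 * kappa ε)) * f1 x ε
        - (w x ε + qx x ε) / 4 * f2 x ε)
    -- joint C¹ regularity of `f` in `(x,ε)` with equal mixed second partials
    (hf1_cont : ContinuousOn (fun p : ℝ × ℝ => f1 p.1 p.2)
      (Set.Icc (0:ℝ) 1 ×ˢ Set.Ioo (-1 : ℝ) 1))
    (hf2_cont : ContinuousOn (fun p : ℝ × ℝ => f2 p.1 p.2)
      (Set.Icc (0:ℝ) 1 ×ˢ Set.Ioo (-1 : ℝ) 1))
    (hf1x_cont : ContinuousOn (fun p : ℝ × ℝ => f1x p.1 p.2)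
      (Set.Icc (0:ℝ) 1 ×ˢ Set.Ioo (-1 : ℝ) 1))
    (hf2x_cont : ContinuousOn (fun p : ℝ × ℝ => f2x p.1 p.2)
      (Set.Icc (0:ℝ) 1 ×ˢ Set.Ioo (-1 : ℝ) 1))
    (hf1e : ∀ x ∈ Set.Icc (0:ℝ) 1, HasDerivAt (fun e => f1 x e) (f1e x) 0)
    (hf2e : ∀ x ∈ Set.Icc (0:ℝ) 1, HasDerivAt (fun e => f2 x e) (f2e x) 0)
    (hf1e_cont : ContinuousOn f1e (Set.Icc 0 1))
    (hf2e_cont : ContinuousOn f2e (Set.Icc 0 1))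
    (hf1_mixed : ∀ x ∈ Set.Icc (0:ℝ) 1,
      HasDerivWithinAt f1e (f1xe x) (Set.Icc 0 1) x ∧
      HasDerivAt (fun e => f1x x e) (f1xe x) 0)
    (hf2_mixed : ∀ x ∈ Set.Icc (0:ℝ) 1,
      HasDerivWithinAt f2e (f2xe x) (Set.Icc 0 1) x ∧
      HasDerivAt (fun e => f2x x e) (f2xe x) 0) :
    kappa' * ∫ x in (0:ℝ)..1,
        (f1 x 0) ^ 2 * (1 + Complex.exp (-q x 0) / (16 * kappa 0 ^ 2))
          + (f2 x 0) ^ 2 * (1 + Complex.exp (q x 0) / (16 * kappa 0 ^ 2))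
      = ((f1e 1 * f2 1 0 - f2e 1 * f1 1 0 - 1 / 2 * qe 1 * (f1 1 0 * f2 1 0))
            - (f1e 0 * f2 0 0 - f2e 0 * f1 0 0 - 1 / 2 * qe 0 * (f1 0 0 * f2 0 0)))
        + (∫ x in (0:ℝ)..1,
            (kappa 0 / 2 * ((f2 x 0) ^ 2 - (f1 x 0) ^ 2)
              + 1 / (32 * kappa 0) *
                  ((f2 x 0) ^ 2 * Complex.exp (q x 0)
                    - (f1 x 0) ^ 2 * Complex.exp (-q x 0))) * qe x)
        - 1 / 2 * ∫ x in (0:ℝ)..1, f1 x 0 * f2 x 0 * we x := by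

  have h0 : (0:ℝ) ∈ Set.Ioo (-1:ℝ) 1 := by norm_num
  have hκ0 : kappa 0 ≠ 0 := hkappa 0 h0
  have hden0 : (16:ℂ) * kappa 0 ≠ 0 := by simp [hκ0]
  have hmem : Set.Ioo (-1:ℝ) 1 ∈ nhds (0:ℝ) := Ioo_mem_nhds (by norm_num) (by norm_num)
  set I : ℝ → ℂ := fun x => (f1 x 0) ^ 2 * (1 + Complex.exp (-q x 0) / (16 * kappa 0 ^ 2))
          + (f2 x 0) ^ 2 * (1 + Complex.exp (q x 0) / (16 * kappa 0 ^ 2)) with hIdef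
  set J : ℝ → ℂ := fun x => (kappa 0 / 2 * ((f2 x 0) ^ 2 - (f1 x 0) ^ 2)
              + 1 / (32 * kappa 0) * ((f2 x 0) ^ 2 * Complex.exp (q x 0)
                    - (f1 x 0) ^ 2 * Complex.exp (-q x 0))) * qe x with hJdef
  set K : ℝ → ℂ := fun x => f1 x 0 * f2 x 0 * we x with hKdef
  set G : ℝ → ℂ := fun x => f1e x * f2 x 0 - f2e x * f1 x 0
      - 1 / 2 * qe x * (f1 x 0 * f2 x 0) with hGdef
  set D : ℝ → ℂ := fun x => kappa' * I x - J x + 1 / 2 * K x with hDdef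
  -- continuity of slices at ε = 0
  have hslice : ∀ {F : ℝ → ℝ → ℂ},
      ContinuousOn (fun p : ℝ × ℝ => F p.1 p.2) (Set.Icc (0:ℝ) 1 ×ˢ Set.Ioo (-1:ℝ) 1) →
      ContinuousOn (fun x => F x 0) (Set.Icc (0:ℝ) 1) := by
    intro F h
    exact h.comp ((continuous_id.prodMk continuous_const).continuousOn)
      (fun x hx => ⟨hx, h0⟩)
  have hf1c := hslice hf1_cont
  have hf2c := hslice hf2_cont
  have hqc := hslice hq_cont
  have hexpc : ContinuousOn (fun x => Complex.exp (q x 0)) (Set.Icc (0:ℝ) 1) :=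
    Complex.continuous_exp.comp_continuousOn hqc
  have hexpnc : ContinuousOn (fun x => Complex.exp (-q x 0)) (Set.Icc (0:ℝ) 1) :=
    Complex.continuous_exp.comp_continuousOn hqc.neg
  -- the key derivative computation
  have hGderiv : ∀ x ∈ Set.Icc (0:ℝ) 1, HasDerivWithinAt G (D x) (Set.Icc 0 1) x := by
    intro x hx
    have h1x := hf1x 0 h0 x hx
    have h2x := hf2x 0 h0 x hx
    have hEexp : HasDerivAt (fun e => Complex.exp (q x e))
        (Complex.exp (q x 0) * qe x) 0 := (hqe x hx).cexp
    have hFexp : HasDerivAt (fun e => Complex.exp (-q x e))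
        (Complex.exp (-q x 0) * -qe x) 0 := ((hqe x hx).neg).cexp
    have hden : HasDerivAt (fun e => 16 * kappa e) (16 * kappa') 0 := hkappa'.const_mul 16
    have hα := hkappa'.sub (hEexp.div hden hden0)
    have hβ := hkappa'.sub (hFexp.div hden hden0)
    have haw : HasDerivAt (fun e => (w x e + qx x e) / 4) ((we x + qex x) / 4) 0 :=
      ((hwe x hx).add (hq_mixed x hx).2).div_const 4
    have hR1 := (haw.mul (hf1e x hx)).add (hα.mul (hf2e x hx))
    have hR1' := hR1.congr_of_eventuallyEq
      (Filter.eventuallyEq_of_mem hmem (fun ε hε => hODE1 ε hε x hx))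
    have e1 := (hf1_mixed x hx).2.unique hR1'
    have hR2 := ((hβ.neg).mul (hf1e x hx)).sub (haw.mul (hf2e x hx))
    have hR2' := hR2.congr_of_eventuallyEq
      (Filter.eventuallyEq_of_mem hmem (fun ε hε => hODE2 ε hε x hx))
    have e2 := (hf2_mixed x hx).2.unique hR2'
    have hGd := (((hf1_mixed x hx).1.mul h2x).sub ((hf2_mixed x hx).1.mul h1x)).sub
      ((((hq_mixed x hx).1.const_mul ((1:ℂ)/2)).mul (h1x.mul h2x)))
    have hG' : HasDerivWithinAt G
        (f1xe x * f2 x 0 + f1e x * f2x x 0 - (f2xe x * f1 x 0 + f2e x * f1x x 0)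
          - (1 / 2 * qex x * (f1 x 0 * f2 x 0)
            + 1 / 2 * qe x * (f1x x 0 * f2 x 0 + f1 x 0 * f2x x 0)))
        (Set.Icc 0 1) x := by
      rw [hGdef]
      convert hGd using 1
      · rfl
      · funext t
        simp only [Pi.mul_apply, Pi.sub_apply]
      · simp only [Pi.mul_apply]
    convert hG' using 1
    rw [e1, e2, hODE1 0 h0 x hx, hODE2 0 h0 x hx, hDdef]
    simp only [hIdef, hJdef, hKdef]
    simp only [Pi.sub_apply, Pi.div_apply, Pi.neg_apply]
    linear_combination ((kappa 0)⁻¹ * qe x *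
      (Complex.exp (q x 0) * f2 x 0 ^ 2 - Complex.exp (-q x 0) * f1 x 0 ^ 2) / 16) *
      (mul_inv_cancel₀ hκ0)
  -- continuity of G and of the integrands
  have hcont_G : ContinuousOn G (Set.Icc (0:ℝ) 1) := by
    rw [hGdef]
    exact ((hf1e_cont.mul hf2c).sub (hf2e_cont.mul hf1c)).sub
      ((continuousOn_const.mul hqe_cont).mul (hf1c.mul hf2c))
  have hcont_I : ContinuousOn I (Set.Icc (0:ℝ) 1) := by
    rw [hIdef]
    exact ((hf1c.pow 2).mul (continuousOn_const.add (hexpnc.div_const _))).add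
      ((hf2c.pow 2).mul (continuousOn_const.add (hexpc.div_const _)))
  have hcont_J : ContinuousOn J (Set.Icc (0:ℝ) 1) := by
    rw [hJdef]
    exact ((continuousOn_const.mul ((hf2c.pow 2).sub (hf1c.pow 2))).add
      (continuousOn_const.mul (((hf2c.pow 2).mul hexpc).sub
        ((hf1c.pow 2).mul hexpnc)))).mul hqe_cont
  have hcont_K : ContinuousOn K (Set.Icc (0:ℝ) 1) := by
    rw [hKdef]
    exact (hf1c.mul hf2c).mul hwe_cont
  have huIcc : Set.uIcc (0:ℝ) 1 = Set.Icc (0:ℝ) 1 := Set.uIcc_of_le zero_le_one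
  have hintI : IntervalIntegrable I volume 0 1 := by
    apply ContinuousOn.intervalIntegrable; rwa [huIcc]
  have hintJ : IntervalIntegrable J volume 0 1 := by
    apply ContinuousOn.intervalIntegrable; rwa [huIcc]
  have hintK : IntervalIntegrable K volume 0 1 := by
    apply ContinuousOn.intervalIntegrable; rwa [huIcc]
  have hcont_D : ContinuousOn D (Set.Icc (0:ℝ) 1) := by
    rw [hDdef]
    exact ((continuousOn_const.mul hcont_I).sub hcont_J).add (continuousOn_const.mul hcont_K)
  have hintD : IntervalIntegrable D volume 0 1 := by
    apply ContinuousOn.intervalIntegrable; rwa [huIcc]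
  -- fundamental theorem of calculus
  have hFTC : ∫ x in (0:ℝ)..1, D x = G 1 - G 0 := by
    apply intervalIntegral.integral_eq_sub_of_hasDeriv_right_of_le zero_le_one hcont_G
      _ hintD
    intro x hx
    exact ((hGderiv x (Set.mem_Icc_of_Ioo hx)).hasDerivAt
      (Icc_mem_nhds hx.1 hx.2)).hasDerivWithinAt
  -- split the integral
  have hsplit : ∫ x in (0:ℝ)..1, D x
      = kappa' * (∫ x in (0:ℝ)..1, I x) - (∫ x in (0:ℝ)..1, J x)
        + 1 / 2 * ∫ x in (0:ℝ)..1, K x := by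
    rw [hDdef]
    rw [intervalIntegral.integral_add (((hintI.const_mul kappa').sub hintJ))
      (hintK.const_mul (1/2)),
      intervalIntegral.integral_sub (hintI.const_mul kappa') hintJ,
      intervalIntegral.integral_const_mul, intervalIntegral.integral_const_mul]
  have hGG : G 1 - G 0 = kappa' * (∫ x in (0:ℝ)..1, I x) - (∫ x in (0:ℝ)..1, J x)
      + 1 / 2 * ∫ x in (0:ℝ)..1, K x := by rw [← hFTC, hsplit]
  show kappa' * (∫ x in (0:ℝ)..1, I x)
      = (G 1 - G 0) + (∫ x in (0:ℝ)..1, J x) - 1 / 2 * ∫ x in (0:ℝ)..1, K x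
  rw [hGG]; ring
end
end

section
/- Derivative of the Dirichlet characteristic function at a Dirichlet eigenvalue (the identity underlying Proposition 3.6). Fix μ ∈ ℂ*, let q : [0,1] → ℂ be continuously differentiable and w : [0,1] → ℂ continuous, let M be the fundamental solution of the reduced sinh-Gordon equation with spectral parameter μ and data (q, w), and let N : [0,1] → Mat₂(ℂ) solve N′ = C·N + Ċ·M with N(0) = 0, where Ċ(x) := [[0, 1 + e^{q(x)}/(16μ²)], [−(1 + e^{−q(x)}/(16μ²)), 0]] is the derivative of the coefficient matrix C with respect to the spectral parameter at μ (so N is the λ-derivative of the fundamental solution at λ = μ). If M₁₂(1) = 0 (i.e. μ is a Dirichlet eigenvalue), then N₁₂(1) = M₁₁(1) · ∫₀¹ [M₁₂(x)²·(1 + e^{−q(x)}/(16μ²)) + M₂₂(x)²·(1 + e^{q(x)}/(16μ²))] dx. -/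
open MeasureTheory

noncomputable section

/-- The derivative of the coefficient matrix with respect to the spectral parameter at `mu`. -/
def coeffMatDot (mu qval : ℂ) : Matrix (Fin 2) (Fin 2) ℂ :=
  !![0, 1 + Complex.exp qval / (16 * mu ^ 2);
     -(1 + Complex.exp (-qval) / (16 * mu ^ 2)), 0]

/-- **Derivative of the Dirichlet characteristic function at a Dirichlet eigenvalue**
(the identity underlying Proposition 3.6). -/
theorem deriv_of_dirichlet_characteristic_function
    (mu : ℂ) (hmu : mu ≠ 0)
    (q qx w : ℝ → ℂ)
    (hqx : ∀ x ∈ Set.Icc (0:ℝ) 1, HasDerivWithinAt q (qx x) (Set.Icc 0 1) x)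
    (hqx_cont : ContinuousOn qx (Set.Icc 0 1))
    (hw_cont : ContinuousOn w (Set.Icc 0 1))
    (M N Mx Nx : ℝ → Matrix (Fin 2) (Fin 2) ℂ)
    -- `M` is the fundamental solution
    (hM0 : M 0 = 1)
    (hMx : ∀ x ∈ Set.Icc (0:ℝ) 1, ∀ i j : Fin 2,
      HasDerivWithinAt (fun t => M t i j) (Mx x i j) (Set.Icc 0 1) x)
    (hMODE : ∀ x ∈ Set.Icc (0:ℝ) 1,
      Mx x = coeffMat mu (w x + qx x) (q x) * M x)
    -- `N` is the λ-derivative of the fundamental solution at `λ = mu`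
    (hN0 : N 0 = 0)
    (hNx : ∀ x ∈ Set.Icc (0:ℝ) 1, ∀ i j : Fin 2,
      HasDerivWithinAt (fun t => N t i j) (Nx x i j) (Set.Icc 0 1) x)
    (hNODE : ∀ x ∈ Set.Icc (0:ℝ) 1,
      Nx x = coeffMat mu (w x + qx x) (q x) * N x + coeffMatDot mu (q x) * M x)
    -- `mu` is a Dirichlet eigenvalue
    (hdir : M 1 0 1 = 0) :
    N 1 0 1 = M 1 0 0 * ∫ x in (0:ℝ)..1,
      (M x 0 1) ^ 2 * (1 + Complex.exp (-q x) / (16 * mu ^ 2))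
        + (M x 1 1) ^ 2 * (1 + Complex.exp (q x) / (16 * mu ^ 2)) := by
  have h01 : (0:ℝ) ≤ 1 := zero_le_one
  have hq_cont : ContinuousOn q (Set.Icc 0 1) := fun x hx => (hqx x hx).continuousWithinAt
  have hM_cont : ∀ i j : Fin 2, ContinuousOn (fun t => M t i j) (Set.Icc 0 1) :=
    fun i j x hx => (hMx x hx i j).continuousWithinAt
  have hN_cont : ∀ i j : Fin 2, ContinuousOn (fun t => N t i j) (Set.Icc 0 1) :=
    fun i j x hx => (hNx x hx i j).continuousWithinAt
  have hM' : ∀ x ∈ Set.Icc (0:ℝ) 1, ∀ i j : Fin 2,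
      HasDerivWithinAt (fun t => M t i j)
        (coeffMat mu (w x + qx x) (q x) i 0 * M x 0 j
          + coeffMat mu (w x + qx x) (q x) i 1 * M x 1 j) (Set.Icc 0 1) x := by
    intro x hx i j
    have h := hMx x hx i j
    rwa [hMODE x hx, Matrix.mul_apply, Fin.sum_univ_two] at h
  have hN' : ∀ x ∈ Set.Icc (0:ℝ) 1, ∀ i j : Fin 2,
      HasDerivWithinAt (fun t => N t i j)
        (coeffMat mu (w x + qx x) (q x) i 0 * N x 0 j
          + coeffMat mu (w x + qx x) (q x) i 1 * N x 1 j
          + (coeffMatDot mu (q x) i 0 * M x 0 j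
            + coeffMatDot mu (q x) i 1 * M x 1 j)) (Set.Icc 0 1) x := by
    intro x hx i j
    have h := hNx x hx i j
    rwa [hNODE x hx, Matrix.add_apply, Matrix.mul_apply, Matrix.mul_apply,
      Fin.sum_univ_two, Fin.sum_univ_two] at h
  -- the Wronskian is constant
  have hδ : ∀ x ∈ Set.Icc (0:ℝ) 1, HasDerivWithinAt
      (fun t => M t 0 0 * M t 1 1 - M t 0 1 * M t 1 0) 0 (Set.Icc 0 1) x := by
    intro x hx
    have h := ((hM' x hx 0 0).mul (hM' x hx 1 1)).sub ((hM' x hx 0 1).mul (hM' x hx 1 0))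
    refine h.congr_deriv ?_
    simp only [coeffMat, Matrix.cons_val', Matrix.cons_val_zero, Matrix.cons_val_one,
      Matrix.head_cons, Matrix.empty_val', Matrix.cons_val_fin_one, Matrix.head_fin_const,
      Matrix.of_apply]
    ring
  have hδ_cont : ContinuousOn (fun t => M t 0 0 * M t 1 1 - M t 0 1 * M t 1 0) (Set.Icc 0 1) :=
    ((hM_cont 0 0).mul (hM_cont 1 1)).sub ((hM_cont 0 1).mul (hM_cont 1 0))
  have hdet1 : M 1 0 0 * M 1 1 1 - M 1 0 1 * M 1 1 0 = 1 := by
    have h := constant_of_has_deriv_right_zero hδ_cont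
      (fun x hx => (hδ x (Set.Ico_subset_Icc_self hx)).mono_of_mem_nhdsWithin
        (Icc_mem_nhdsGE_of_mem hx)) 1 (Set.right_mem_Icc.mpr h01)
    rw [hM0] at h
    simpa [Matrix.one_apply] using h
  -- FTC for φ(t) = M₂₂ N₁₂ - M₁₂ N₂₂
  have hφ : ∀ x ∈ Set.Icc (0:ℝ) 1, HasDerivWithinAt
      (fun t => M t 1 1 * N t 0 1 - M t 0 1 * N t 1 1)
      ((M x 0 1) ^ 2 * (1 + Complex.exp (-q x) / (16 * mu ^ 2))
        + (M x 1 1) ^ 2 * (1 + Complex.exp (q x) / (16 * mu ^ 2))) (Set.Icc 0 1) x := by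
    intro x hx
    have h := ((hM' x hx 1 1).mul (hN' x hx 0 1)).sub ((hM' x hx 0 1).mul (hN' x hx 1 1))
    refine h.congr_deriv ?_
    simp only [coeffMat, coeffMatDot, Matrix.cons_val', Matrix.cons_val_zero,
      Matrix.cons_val_one, Matrix.head_cons, Matrix.empty_val', Matrix.cons_val_fin_one,
      Matrix.head_fin_const, Matrix.of_apply]
    ring
  have hint_cont : ContinuousOn (fun x =>
      (M x 0 1) ^ 2 * (1 + Complex.exp (-q x) / (16 * mu ^ 2))
        + (M x 1 1) ^ 2 * (1 + Complex.exp (q x) / (16 * mu ^ 2))) (Set.Icc 0 1) := by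
    apply ContinuousOn.add
    · exact ((hM_cont 0 1).pow 2).mul (continuousOn_const.add
        ((Complex.continuous_exp.comp_continuousOn hq_cont.neg).div_const _))
    · exact ((hM_cont 1 1).pow 2).mul (continuousOn_const.add
        ((Complex.continuous_exp.comp_continuousOn hq_cont).div_const _))
  have hint : IntervalIntegrable (fun x =>
      (M x 0 1) ^ 2 * (1 + Complex.exp (-q x) / (16 * mu ^ 2))
        + (M x 1 1) ^ 2 * (1 + Complex.exp (q x) / (16 * mu ^ 2))) volume 0 1 := by
    apply ContinuousOn.intervalIntegrable
    rwa [Set.uIcc_of_le h01]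
  have hFTC := intervalIntegral.integral_eq_sub_of_hasDeriv_right_of_le h01
    (((hM_cont 1 1).mul (hN_cont 0 1)).sub ((hM_cont 0 1).mul (hN_cont 1 1)))
    (fun x hx => (hφ x (Set.Ioo_subset_Icc_self hx)).mono_of_mem_nhdsWithin
      (Icc_mem_nhdsGT_of_mem (Set.Ioo_subset_Ico_self hx))) hint
  rw [hFTC]
  simp only [Pi.mul_apply, Pi.sub_apply]
  rw [hN0]
  simp only [Matrix.zero_apply, mul_zero, sub_zero]
  linear_combination (-(N 1 0 1)) * hdet1 +
    (M 1 0 0 * N 1 1 1 - M 1 1 0 * N 1 0 1) * hdir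
end
end

section
/- A vanishing normalized contour integral forces a root in the gap (Lemma 7.2, abstract form). Let a, b ∈ ℝ with a ≤ b, τ := (a+b)/2, γ := a − b, and let w be the standard root associated with (a,b). Let r > |γ|/2, let U ⊆ ℂ be open with the closed disc {λ : |λ−τ| ≤ r} contained in U, let h be analytic on U, real-valued on U ∩ ℝ and nonvanishing at every point of [a,b], and let f be analytic on U and real-valued on U ∩ ℝ. If ∮_{|λ−τ|=r} f(λ)·h(λ)/w(λ) dλ = 0, then f has a root in the interval [a,b], i.e. there exists ν ∈ [a,b] with f(ν) = 0. -/
set_option maxHeartbeats 1000000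

open Filter

noncomputable section

/-- The segment joining two complex numbers `a` and `b`. -/
def seg (a b : ℂ) : Set ℂ := (fun t : ℝ => (1 - (t : ℂ)) * a + (t : ℂ) * b) '' Set.Icc 0 1

open MeasureTheory in
lemma interval_swap {T : ℝ} (hT : 0 ≤ T) (F : ℝ → ℝ → ℂ)
    (hF : ContinuousOn (Function.uncurry F) (Set.Icc 0 T ×ˢ Set.Icc 0 T)) :
    ∫ s in (0:ℝ)..T, ∫ θ in (0:ℝ)..T, F s θ = ∫ θ in (0:ℝ)..T, ∫ s in (0:ℝ)..T, F s θ := by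
  have hint : Integrable (Function.uncurry F)
      ((volume.restrict (Set.Ioc (0:ℝ) T)).prod (volume.restrict (Set.Ioc (0:ℝ) T))) := by
    rw [Measure.prod_restrict]
    have : IntegrableOn (Function.uncurry F) (Set.Icc 0 T ×ˢ Set.Icc 0 T)
        (volume.prod volume) := hF.integrableOn_compact (isCompact_Icc.prod isCompact_Icc)
    exact this.mono_set (Set.prod_mono Set.Ioc_subset_Icc_self Set.Ioc_subset_Icc_self)
  simp only [intervalIntegral.integral_of_le hT]
  exact MeasureTheory.integral_integral_swap hint

lemma mem_seg_imp {a b : ℝ} (hab : a ≤ b) {z : ℂ} (hz : z ∈ seg a b) :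
    z.im = 0 ∧ a ≤ z.re ∧ z.re ≤ b := by
  obtain ⟨t, ht, rfl⟩ := hz
  have h : (1 - (t : ℂ)) * a + (t : ℂ) * b = (((1 - t) * a + t * b : ℝ) : ℂ) := by
    push_cast; ring
  dsimp only
  rw [h]
  simp only [Complex.ofReal_im, Complex.ofReal_re]
  refine ⟨trivial, ?_, ?_⟩ <;> nlinarith [ht.1, ht.2]

lemma isClosed_seg (a b : ℂ) : IsClosed (seg a b) := by
  have : Continuous (fun t : ℝ => (1 - (t : ℂ)) * a + (t : ℂ) * b) := by continuity
  exact ((isCompact_Icc.image this)).isClosed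

lemma isPreconnected_ext (c : ℂ) {s : ℝ} (hs : 0 ≤ s) :
    IsPreconnected {z : ℂ | s < ‖z - c‖} := by
  have h2 : (1 : Cardinal) < Module.rank ℝ ℂ := by
    rw [Complex.rank_real_complex]
    exact Cardinal.one_lt_two
  have hsph : IsPreconnected (Metric.sphere (0 : ℂ) 1) :=
    (isConnected_sphere h2 0 zero_le_one).isPreconnected
  have hprod : IsPreconnected ((Set.Ioi s) ×ˢ (Metric.sphere (0:ℂ) 1)) :=
    isPreconnected_Ioi.prod hsph
  have himage : {z : ℂ | s < ‖z - c‖} =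
      (fun p : ℝ × ℂ => c + p.1 • p.2) '' ((Set.Ioi s) ×ˢ (Metric.sphere (0:ℂ) 1)) := by
    ext z
    simp only [Set.mem_setOf_eq, Set.mem_image, Set.mem_prod, Set.mem_Ioi,
      Metric.mem_sphere, dist_zero_right]
    constructor
    · intro hz
      have hz0 : z - c ≠ 0 := by
        intro h0
        rw [h0] at hz; simp at hz; linarith
      refine ⟨⟨‖z - c‖, (‖z - c‖)⁻¹ • (z - c)⟩, ⟨hz, ?_⟩, ?_⟩
      · rw [norm_smul]
        simp [norm_ne_zero_iff.mpr hz0, abs_of_nonneg (inv_nonneg.2 (norm_nonneg _)),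
          inv_mul_cancel₀ (norm_ne_zero_iff.mpr hz0)]
      · simp only [smul_smul]
        rw [mul_inv_cancel₀ (norm_ne_zero_iff.mpr hz0)]
        simp
    · rintro ⟨⟨t, v⟩, ⟨ht, hv⟩, rfl⟩
      simp only [add_sub_cancel_left]
      rw [norm_smul]
      simp only [Real.norm_eq_abs, hv, mul_one]
      calc s < t := ht
        _ ≤ |t| := le_abs_self t
  rw [himage]
  exact (hprod.image _ (by fun_prop))

lemma eq_of_sq_eq_one {S : Set ℂ} (hS : IsPreconnected S) {q : ℂ → ℂ}
    (hq : ContinuousOn q S) (h1 : ∀ u ∈ S, q u ^ 2 = 1) {u v : ℂ}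
    (hu : u ∈ S) (hv : v ∈ S) : q u = q v := by
  have hval : ∀ x ∈ S, q x = 1 ∨ q x = -1 := by
    intro x hx
    have hx1 := h1 x hx
    have h2 : (q x - 1) * (q x + 1) = 0 := by linear_combination hx1
    rcases mul_eq_zero.1 h2 with h | h
    · exact Or.inl (sub_eq_zero.mp h)
    · exact Or.inr (eq_neg_of_add_eq_zero_left h)
  by_contra hne
  have himg : IsPreconnected (q '' S) := hS.image q hq
  -- one of q u, q v is 1 and the other is -1
  have hcases : (1 ∈ q '' S) ∧ (-1 ∈ q '' S) := by
    rcases hval u hu with h | h <;> rcases hval v hv with h' | h'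
    · exact absurd (h.trans h'.symm) hne
    · exact ⟨⟨u, hu, h⟩, ⟨v, hv, h'⟩⟩
    · exact ⟨⟨v, hv, h'⟩, ⟨u, hu, h⟩⟩
    · exact absurd (h.trans h'.symm) hne
  have := himg (Metric.ball 1 1) (Metric.ball (-1) 1) Metric.isOpen_ball Metric.isOpen_ball
    (by rintro x ⟨y, hy, rfl⟩
        rcases hval y hy with h | h <;> rw [h]
        · exact Or.inl (Metric.mem_ball_self one_pos)
        · exact Or.inr (Metric.mem_ball_self one_pos))
    ⟨1, hcases.1, Metric.mem_ball_self one_pos⟩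
    ⟨-1, hcases.2, Metric.mem_ball_self one_pos⟩
  obtain ⟨x, ⟨y, hy, rfl⟩, hb1, hb2⟩ := this
  rcases hval y hy with h | h <;> rw [h] at hb1 hb2
  · rw [Metric.mem_ball] at hb2
    rw [Complex.dist_eq] at hb2
    norm_num at hb2
  · rw [Metric.mem_ball] at hb1
    rw [Complex.dist_eq] at hb1
    norm_num at hb1

lemma phi_not_mem {a b : ℝ} (hab : a < b) {u : ℂ} (hu : 1 < ‖u‖) :
    ((((a+b)/2:ℝ)):ℂ) + ((a-b:ℝ):ℂ)/4 * (u + u⁻¹) ∉ seg (a:ℂ) (b:ℂ) := by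
  intro hmem
  have hu0 : u ≠ 0 := by
    intro h; rw [h] at hu; simp at hu; linarith
  have hinv : u * u⁻¹ = 1 := mul_inv_cancel₀ hu0
  obtain ⟨him, h1, h2⟩ := mem_seg_imp hab.le hmem
  set z : ℂ := ((((a+b)/2:ℝ)):ℂ) + ((a-b:ℝ):ℂ)/4 * (u + u⁻¹) with hzdef
  have hzre : z = ((z.re : ℝ) : ℂ) := by
    apply Complex.ext <;> simp [him]
  set x : ℝ := z.re with hxdef
  set m : ℝ := 4*(x - (a+b)/2)/(a-b) with hmdef
  have hab' : a - b ≠ 0 := by intro h; linarith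
  have h4 : ((a-b:ℝ):ℂ) ≠ 0 := Complex.ofReal_ne_zero.mpr hab'
  have hm : m * (a-b) = 4*x - 2*(a+b) := by rw [hmdef, div_mul_cancel₀ _ hab']; ring
  have hm2 : -2 ≤ m ∧ m ≤ 2 := by constructor <;> nlinarith
  have hX : ((a-b:ℝ):ℂ)/4 * (u + u⁻¹) = ((x:ℝ):ℂ) - ((((a+b)/2:ℝ)):ℂ) := by
    linear_combination hzre
  have hmC : ((m:ℝ):ℂ) * ((a-b:ℝ):ℂ) = 4*(((x:ℝ):ℂ) - ((((a+b)/2:ℝ)):ℂ)) := by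
    have hc := congrArg (fun t : ℝ => (t : ℂ)) hm
    push_cast at hc ⊢
    linear_combination hc
  have hu_eq : u + u⁻¹ = ((m:ℝ):ℂ) := by
    refine mul_right_cancel₀ h4 ?_
    rw [hmC]
    linear_combination 4 * hX
  have heq : u^2 - ((m:ℝ):ℂ)*u + 1 = 0 := by
    linear_combination u * hu_eq - hinv
  have heqc : (starRingEnd ℂ u)^2 - ((m:ℝ):ℂ)*(starRingEnd ℂ u) + 1 = 0 := by
    have := congrArg (starRingEnd ℂ) heq
    simpa [map_pow, Complex.conj_ofReal] using this
  have hfac : (starRingEnd ℂ u - u) * (starRingEnd ℂ u - u⁻¹) = 0 := by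
    linear_combination heqc - (starRingEnd ℂ u) * hu_eq + hinv
  rcases mul_eq_zero.1 hfac with hcc | hcc
  · -- u is real
    have hre : u = ((u.re : ℝ) : ℂ) := (Complex.conj_eq_iff_re.mp (sub_eq_zero.mp hcc)).symm
    set y : ℝ := u.re with hydef
    have hy0 : y ≠ 0 := by
      intro h
      rw [h] at hre; simp at hre; exact hu0 hre
    have hyabs : 1 < |y| := by rwa [hre, Complex.norm_real, Real.norm_eq_abs] at hu
    have hyeq : y + y⁻¹ = m := by
      have h := hu_eq
      rw [hre] at h
      push_cast at h
      exact_mod_cast h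
    have hyinv : y * y⁻¹ = 1 := mul_inv_cancel₀ hy0
    have hym : y * y + 1 = m * y := by linear_combination y * hyeq - hyinv
    rcases lt_abs.mp hyabs with hy | hy
    · nlinarith [sq_nonneg (y - 1)]
    · nlinarith [sq_nonneg (y + 1)]
  · -- |u| = 1
    have hmc : u * starRingEnd ℂ u = 1 := by
      rw [sub_eq_zero.mp hcc]
      exact hinv
    have habs : (‖u‖)^2 = 1 := by
      rw [Complex.sq_norm]
      have : ((Complex.normSq u : ℝ):ℂ) = 1 := by rw [← Complex.mul_conj]; exact hmc
      exact_mod_cast this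
    nlinarith


lemma w_eq {a b : ℝ} (hab : a < b) {w : ℂ → ℂ}
    (hw_an : DifferentiableOn ℂ w (seg (a : ℂ) (b : ℂ))ᶜ)
    (hw_sq : ∀ z ∉ seg (a : ℂ) (b : ℂ), w z ^ 2 = ((a : ℂ) - z) * ((b : ℂ) - z))
    (hw_lim : Tendsto (fun z : ℂ => w z / ((((a + b) / 2 : ℝ) : ℂ) - z))
      (Filter.comap (fun z : ℂ => ‖z‖) Filter.atTop) (nhds 1)) :
    ∀ u : ℂ, 1 < ‖u‖ →
      w (((((a+b)/2:ℝ)):ℂ) + ((a-b:ℝ):ℂ)/4 * (u + u⁻¹)) = ((a-b:ℝ):ℂ)/4 * (u⁻¹ - u) := by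
  set c : ℂ := (((a + b) / 2 : ℝ) : ℂ) with hc
  set g : ℂ := ((a - b : ℝ) : ℂ) with hg
  have hg0 : g ≠ 0 := Complex.ofReal_ne_zero.mpr (by intro h; linarith)
  set φ : ℂ → ℂ := fun u => c + g/4 * (u + u⁻¹) with hφ
  set S : Set ℂ := {u : ℂ | 1 < ‖u‖} with hS
  set den : ℂ → ℂ := fun u => g/4 * (u⁻¹ - u) with hden
  have hSpre : IsPreconnected S := by
    rw [hS]; simpa using isPreconnected_ext (0:ℂ) zero_le_one
  have hu0 : ∀ u ∈ S, u ≠ 0 := by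
    intro u hu h0
    rw [h0] at hu; simp [hS] at hu; linarith
  have hden0 : ∀ u ∈ S, den u ≠ 0 := by
    intro u hu
    have h0 := hu0 u hu
    simp only [hden]
    refine mul_ne_zero (by simpa using hg0) ?_
    intro hduu
    have h2 : u^2 = 1 := by
      have h1 : u * u⁻¹ = 1 := mul_inv_cancel₀ h0
      have h3 := sub_eq_zero.mp hduu
      linear_combination -u * h3 + h1
    have h4 : (‖u‖)^2 = 1 := by
      rw [← norm_pow, h2, norm_one]
    have hu1 : 1 < ‖u‖ := hu
    nlinarith
  have hnot : ∀ u ∈ S, φ u ∉ seg (a:ℂ) (b:ℂ) := fun u hu => phi_not_mem hab hu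
  have hq_cont : ContinuousOn (fun u => w (φ u) / den u) S := by
    have hφcont : ContinuousOn φ S := by
      refine continuousOn_const.add (continuousOn_const.mul ?_)
      exact continuousOn_id.add (continuousOn_id.inv₀ hu0)
    have hwcont : ContinuousOn (fun u => w (φ u)) S :=
      (hw_an.continuousOn).comp hφcont hnot
    refine hwcont.div ?_ hden0
    refine continuousOn_const.mul (ContinuousOn.sub ?_ continuousOn_id)
    exact continuousOn_id.inv₀ hu0
  have hq_sq : ∀ u ∈ S, (w (φ u) / den u) ^ 2 = 1 := by
    intro u hu
    have h0 := hu0 u hu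
    have h1 : (w (φ u))^2 = ((a:ℂ) - φ u) * ((b:ℂ) - φ u) := hw_sq _ (hnot u hu)
    have h2 : ((a:ℂ) - φ u) * ((b:ℂ) - φ u) = (den u)^2 := by
      simp only [hφ, hden, hc, hg]
      push_cast
      field_simp
      ring
    rw [div_pow, h1, h2, div_self (pow_ne_zero 2 (hden0 u hu))]
  have hconst : ∀ u ∈ S, ∀ v ∈ S, w (φ u) / den u = w (φ v) / den v := fun u hu v hv =>
    eq_of_sq_eq_one hSpre hq_cont hq_sq hu hv
  have h2S : (2:ℂ) ∈ S := by
    simp only [hS, Set.mem_setOf_eq]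
    norm_num
  have habs : ∀ t : ℝ, 1 < t → (t:ℂ) ∈ S := by
    intro t ht
    simp only [hS, Set.mem_setOf_eq, Complex.norm_real, Real.norm_eq_abs]
    rwa [abs_of_pos (by linarith)]
  -- limit along the real axis
  have hlow : ∀ᶠ t : ℝ in atTop, (b-a)/4 * t - ‖c‖ ≤ ‖φ ↑t‖ := by
    filter_upwards [eventually_gt_atTop 1] with t ht
    have ht0 : (0:ℝ) < t := by linarith
    have hX : ‖g/4 * ((t:ℂ) + (t:ℂ)⁻¹)‖ = (b-a)/4 * (t + t⁻¹) := by
      rw [norm_mul]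
      have e1 : ((t:ℂ) + (t:ℂ)⁻¹) = ((t + t⁻¹ : ℝ) : ℂ) := by push_cast; ring
      have e2 : g/4 = (((a-b)/4 : ℝ):ℂ) := by rw [hg]; push_cast; ring
      have hp1 : (0:ℝ) < t + t⁻¹ := by
        have := inv_pos.mpr ht0; linarith
      have hp2 : (a-b)/4 < 0 := by linarith
      rw [e1, e2, Complex.norm_real, Complex.norm_real, Real.norm_eq_abs, Real.norm_eq_abs, abs_of_pos hp1, abs_of_neg hp2]
      ring
    have htri : ‖g/4 * ((t:ℂ) + (t:ℂ)⁻¹)‖ ≤ ‖φ ↑t‖ + ‖c‖ := by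
      have : g/4 * ((t:ℂ) + (t:ℂ)⁻¹) = φ ↑t - c := by simp only [hφ]; ring
      rw [this]
      exact norm_sub_le _ _
    have hge : (b-a)/4 * t ≤ (b-a)/4 * (t + t⁻¹) := by
      have : (0:ℝ) < t⁻¹ := by positivity
      nlinarith
    linarith [hX ▸ htri]
  have hTop : Tendsto (fun t : ℝ => (b-a)/4 * t - ‖c‖) atTop atTop := by
    have h1 : Tendsto (fun t : ℝ => (b-a)/4 * t) atTop atTop :=
      Tendsto.const_mul_atTop (by linarith) tendsto_id
    simpa [sub_eq_add_neg] using tendsto_atTop_add_const_right atTop (-(‖c‖)) h1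
  have hφtop : Tendsto (fun t : ℝ => φ ↑t) atTop
      (comap (fun z : ℂ => ‖z‖) atTop) := by
    rw [tendsto_comap_iff]
    exact tendsto_atTop_mono' _ hlow hTop
  have hA : Tendsto (fun t : ℝ => w (φ ↑t) / (c - φ ↑t)) atTop (nhds 1) := hw_lim.comp hφtop
  have hBreal : Tendsto (fun t : ℝ => ((t^2+1)/(t^2-1) : ℝ)) atTop (nhds 1) := by
    have h0 : Tendsto (fun t : ℝ => (t^2)⁻¹) atTop (nhds 0) :=
      (tendsto_pow_atTop (by norm_num : (2:ℕ) ≠ 0)).inv_tendsto_atTop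
    have hnum : Tendsto (fun t : ℝ => 1 + (t^2)⁻¹) atTop (nhds 1) := by
      simpa using tendsto_const_nhds.add h0
    have hden' : Tendsto (fun t : ℝ => 1 - (t^2)⁻¹) atTop (nhds 1) := by
      simpa using tendsto_const_nhds.sub h0
    have h1 : Tendsto (fun t : ℝ => (1 + (t^2)⁻¹)/(1 - (t^2)⁻¹)) atTop (nhds 1) := by
      have := hnum.div hden' one_ne_zero; rw [div_one] at this; exact this
    refine Tendsto.congr' ?_ h1
    filter_upwards [eventually_gt_atTop 1] with t ht
    have ht0 : t ≠ 0 := by linarith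
    have ht1 : t^2 - 1 ≠ 0 := by nlinarith
    field_simp
  have hB : Tendsto (fun t : ℝ => (c - φ ↑t) / den ↑t) atTop (nhds 1) := by
    have h2 := (Complex.continuous_ofReal.tendsto 1).comp hBreal
    refine Tendsto.congr' ?_ (by simpa using h2)
    filter_upwards [eventually_gt_atTop 1] with t ht
    have ht0 : t ≠ 0 := by linarith
    have htc : (t:ℂ) ≠ 0 := Complex.ofReal_ne_zero.mpr ht0
    have ht1 : (t:ℂ)^2 - 1 ≠ 0 := by
      have : t^2 - 1 ≠ 0 := by nlinarith
      intro hcon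
      apply this
      exact_mod_cast (by push_cast at hcon ⊢; linear_combination hcon : ((t^2 - 1 : ℝ):ℂ) = 0)
    have hinvc : (t:ℂ) * (↑t)⁻¹ = 1 := mul_inv_cancel₀ htc
    have hg4 : -(g/4) ≠ 0 := by
      simpa using hg0
    have e1 : c - φ ↑t = -(g/4) * ((t:ℂ) + (↑t)⁻¹) := by simp only [hφ]; ring
    have e2 : den ↑t = -(g/4) * ((t:ℂ) - (↑t)⁻¹) := by simp only [hden]; ring
    have d2 : (t:ℂ) - (↑t)⁻¹ ≠ 0 := by
      have hr : (0:ℝ) < t - t⁻¹ := by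
        have h1' : t⁻¹ < 1 := by
          rw [inv_lt_one_iff₀]; right; exact ht
        linarith
      intro hcon
      rw [show ((t:ℂ))⁻¹ = ((t⁻¹:ℝ):ℂ) from (Complex.ofReal_inv t).symm,
        ← Complex.ofReal_sub] at hcon
      have := Complex.ofReal_eq_zero.mp hcon
      linarith
    simp only [Function.comp_apply]
    rw [e1, e2, mul_div_mul_left _ _ hg4]
    push_cast
    rw [div_eq_div_iff ht1 d2]
    ring_nf
    linear_combination (-2*(t:ℂ)) * hinvc
  have hq_lim : Tendsto (fun t : ℝ => w (φ ↑t) / den ↑t) atTop (nhds 1) := by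
    have hmul := hA.mul hB
    rw [mul_one] at hmul
    refine Tendsto.congr' ?_ hmul
    filter_upwards [eventually_gt_atTop 1] with t ht
    have ht0 : t ≠ 0 := by linarith
    have htc : (t:ℂ) ≠ 0 := Complex.ofReal_ne_zero.mpr ht0
    have hcφ : c - φ ↑t ≠ 0 := by
      simp only [hφ]
      have h1 : (t:ℂ) + (t:ℂ)⁻¹ = ((t + t⁻¹ : ℝ):ℂ) := by push_cast; ring
      have h2 : (t + t⁻¹ : ℝ) ≠ 0 := by positivity
      intro hcon
      have : g/4 * ((t:ℂ) + (t:ℂ)⁻¹) = 0 := by linear_combination -hcon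
      rcases mul_eq_zero.1 this with h | h
      · exact hg0 (by simpa using (div_eq_zero_iff.1 h).resolve_right (by norm_num))
      · rw [h1] at h; exact h2 (by exact_mod_cast h)
    rw [div_mul_div_comm, mul_comm (w (φ ↑t)) (c - φ ↑t), mul_div_mul_left _ _ hcφ]
  have hq2 : w (φ 2) / den 2 = 1 := by
    have hev : (fun t : ℝ => w (φ ↑t) / den ↑t) =ᶠ[atTop] (fun _ => w (φ 2) / den 2) := by
      filter_upwards [eventually_gt_atTop 1] with t ht
      exact hconst _ (habs t ht) 2 h2S
    exact tendsto_nhds_unique (Tendsto.congr' hev.symm tendsto_const_nhds) hq_lim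
  intro u hu
  have h := hconst u hu 2 h2S
  rw [hq2] at h
  calc w (φ u) = w (φ u) / den u * den u := by
        rw [div_mul_cancel₀ _ (hden0 u hu)]
    _ = den u := by rw [h, one_mul]


lemma w_eq0 {a : ℝ} {w : ℂ → ℂ}
    (hw_an : DifferentiableOn ℂ w (seg (a : ℂ) (a : ℂ))ᶜ)
    (hw_sq : ∀ z ∉ seg (a : ℂ) (a : ℂ), w z ^ 2 = ((a : ℂ) - z) * ((a : ℂ) - z))
    (hw_lim : Tendsto (fun z : ℂ => w z / ((a : ℂ) - z))
      (Filter.comap (fun z : ℂ => ‖z‖) Filter.atTop) (nhds 1)) :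
    ∀ z : ℂ, z ≠ (a : ℂ) → w z = (a : ℂ) - z := by
  set S : Set ℂ := {z : ℂ | 0 < ‖z - (a:ℂ)‖} with hS
  have hmemS : ∀ z : ℂ, z ≠ (a:ℂ) → z ∈ S := by
    intro z hz
    simp only [hS, Set.mem_setOf_eq]
    rw [norm_pos_iff]
    exact sub_ne_zero.mpr hz
  have hnot : ∀ z ∈ S, z ∉ seg (a:ℂ) (a:ℂ) := by
    intro z hz hmem
    obtain ⟨him, h1, h2⟩ := mem_seg_imp le_rfl hmem
    have : z = (a:ℂ) := by
      apply Complex.ext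
      · simp; linarith
      · simpa using him
    rw [hS, Set.mem_setOf_eq, this] at hz
    simp at hz
  have hzne : ∀ z ∈ S, (a:ℂ) - z ≠ 0 := by
    intro z hz
    simp only [hS, Set.mem_setOf_eq, norm_pos_iff] at hz
    intro hcon
    apply hz
    linear_combination -hcon
  have hSpre : IsPreconnected S := isPreconnected_ext (a:ℂ) le_rfl
  have hq_cont : ContinuousOn (fun z => w z / ((a:ℂ) - z)) S := by
    refine ContinuousOn.div ?_ (continuousOn_const.sub continuousOn_id) hzne
    exact hw_an.continuousOn.mono (fun z hz => hnot z hz)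
  have hq_sq : ∀ z ∈ S, (w z / ((a:ℂ) - z))^2 = 1 := by
    intro z hz
    rw [div_pow, hw_sq z (hnot z hz), ← sq, div_self (pow_ne_zero 2 (hzne z hz))]
  have hconst : ∀ z ∈ S, ∀ v ∈ S, w z / ((a:ℂ) - z) = w v / ((a:ℂ) - v) := fun z hz v hv =>
    eq_of_sq_eq_one hSpre hq_cont hq_sq hz hv
  have hreal : Tendsto (fun t : ℝ => ((t:ℝ):ℂ)) atTop (comap (fun z : ℂ => ‖z‖) atTop) := by
    rw [tendsto_comap_iff]
    have : (fun z : ℂ => ‖z‖) ∘ (fun t : ℝ => ((t:ℝ):ℂ)) = fun t : ℝ => |t| := by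
      funext t; simp
    rw [this]
    exact tendsto_abs_atTop_atTop
  have hA : Tendsto (fun t : ℝ => w ↑t / ((a:ℂ) - ↑t)) atTop (nhds 1) := hw_lim.comp hreal
  have hz0 : ((a:ℂ) + 1) ∈ S := by
    apply hmemS
    intro hcon
    have : (1:ℂ) = 0 := by linear_combination hcon
    simp at this
  have hq0 : w ((a:ℂ)+1) / ((a:ℂ) - ((a:ℂ)+1)) = 1 := by
    have hev : (fun t : ℝ => w ↑t / ((a:ℂ) - ↑t)) =ᶠ[atTop]
        (fun _ => w ((a:ℂ)+1) / ((a:ℂ) - ((a:ℂ)+1))) := by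
      filter_upwards [eventually_gt_atTop a] with t ht
      exact hconst _ (hmemS _ (by
        intro hcon
        have : t = a := by exact_mod_cast hcon
        linarith)) _ hz0
    exact tendsto_nhds_unique (Tendsto.congr' hev.symm tendsto_const_nhds) hA
  intro z hz
  have h := hconst z (hmemS z hz) _ hz0
  rw [hq0] at h
  calc w z = w z / ((a:ℂ) - z) * ((a:ℂ) - z) := by
        rw [div_mul_cancel₀ _ (hzne z (hmemS z hz))]
    _ = (a:ℂ) - z := by rw [h, one_mul]

lemma inner_int {a b : ℝ} (hab : a ≤ b) {w : ℂ → ℂ}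
    (hw_an : DifferentiableOn ℂ w (seg (a : ℂ) (b : ℂ))ᶜ)
    (hw_sq : ∀ z ∉ seg (a : ℂ) (b : ℂ), w z ^ 2 = ((a : ℂ) - z) * ((b : ℂ) - z))
    (hw_lim : Tendsto (fun z : ℂ => w z / ((((a + b) / 2 : ℝ) : ℂ) - z))
      (Filter.comap (fun z : ℂ => ‖z‖) Filter.atTop) (nhds 1))
    {r : ℝ} (hr : |a - b| / 2 < r) {z : ℂ}
    (hz : ‖z - (((a+b)/2:ℝ):ℂ)‖ = r) :
    w z ≠ 0 ∧
      (∫ θ in (0:ℝ)..(2*Real.pi), (z - (((a+b)/2:ℝ):ℂ) - ((a-b:ℝ):ℂ)/2 * (Real.cos θ : ℂ))⁻¹)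
        = -(2*(Real.pi:ℂ)) / w z := by
  have hr0 : 0 < r := lt_of_le_of_lt (by positivity) hr
  rcases eq_or_lt_of_le hab with rfl | hlt
  · -- a = b
    have hca : (((a+a)/2:ℝ):ℂ) = (a:ℂ) := by norm_num
    rw [hca] at hz hw_lim ⊢
    have hzne : z ≠ (a:ℂ) := by
      intro hcon
      rw [hcon] at hz
      simp at hz
      linarith
    have hwz : w z = (a:ℂ) - z := w_eq0 hw_an (by simpa using hw_sq) hw_lim z hzne
    have hzsub : (a:ℂ) - z ≠ 0 := fun hcon => hzne (by linear_combination -hcon)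
    constructor
    · rw [hwz]; exact hzsub
    · have hg : ((a-a:ℝ):ℂ) = 0 := by norm_num
      have : ∀ θ : ℝ, (z - (a:ℂ) - ((a-a:ℝ):ℂ)/2 * (Real.cos θ : ℂ))⁻¹ = (z - (a:ℂ))⁻¹ := by
        intro θ; rw [hg]; ring_nf
      rw [intervalIntegral.integral_congr (fun θ _ => this θ)]
      rw [intervalIntegral.integral_const]
      rw [hwz]
      rw [sub_zero, Complex.real_smul]
      push_cast
      have hinv2 : (z - (a:ℂ))⁻¹ * (z - (a:ℂ)) = 1 :=
        inv_mul_cancel₀ (sub_ne_zero.mpr hzne)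
      rw [eq_div_iff hzsub]
      linear_combination (-(2:ℂ) * (Real.pi:ℂ)) * hinv2
  · -- a < b
    set c : ℂ := (((a + b) / 2 : ℝ) : ℂ) with hc
    set g : ℂ := ((a - b : ℝ) : ℂ) with hgdef
    have hg0 : g ≠ 0 := Complex.ofReal_ne_zero.mpr (by intro hcon; linarith)
    have hg4 : g/4 ≠ 0 := by
      intro hcon
      exact hg0 (by linear_combination 4*hcon)
    set s : ℂ := 4*(z-c)/g with hs
    have hzc : z - c = g * s / 4 := by rw [hs]; field_simp
    obtain ⟨d, hd⟩ := IsAlgClosed.exists_pow_nat_eq (k := ℂ) (s^2 - 4) zero_lt_two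
    -- roots of X^2 - s X + 1
    have key : ∀ u : ℂ, u^2 - s*u + 1 = 0 → ‖u‖ ≠ 1 := by
      intro u hroot h1abs
      have hu0 : u ≠ 0 := by
        intro hcon; rw [hcon] at h1abs; simp at h1abs
      have hmul : u * (s - u) = 1 := by linear_combination -hroot
      have hinv : u⁻¹ = s - u := inv_eq_of_mul_eq_one_right hmul
      have hsum : u + u⁻¹ = s := by rw [hinv]; ring
      have hzeq : z = c + g/4 * (u + u⁻¹) := by
        rw [hsum]
        linear_combination hzc
      have : ‖z - c‖ ≤ |a-b|/2 := by
        have h1 : z - c = g/4 * (u + u⁻¹) := by linear_combination hzeq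
        rw [h1, norm_mul]
        have h2 : ‖g/4‖ = |a-b|/4 := by
          rw [hgdef, show ((a-b:ℝ):ℂ)/4 = (((a-b)/4:ℝ):ℂ) by push_cast; ring,
            Complex.norm_real, Real.norm_eq_abs, abs_div]
          norm_num
        have h3 : ‖u + u⁻¹‖ ≤ 2 := by
          calc ‖u + u⁻¹‖ ≤ ‖u‖ + ‖u⁻¹‖ :=
                norm_add_le _ _
            _ = 2 := by rw [norm_inv, h1abs]; norm_num
        rw [h2]
        nlinarith [norm_nonneg (u + u⁻¹), abs_nonneg (a-b)]
      rw [hz] at this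
      linarith
    set u1 : ℂ := (s + d)/2 with hu1
    set u2 : ℂ := (s - d)/2 with hu2
    have hprod : u1 * u2 = 1 := by
      rw [hu1, hu2]
      linear_combination (-1/4 : ℂ) * hd
    have hsum12 : u1 + u2 = s := by rw [hu1, hu2]; ring
    have hroot1 : u1^2 - s*u1 + 1 = 0 := by
      rw [hu1]; linear_combination (1/4 : ℂ) * hd
    have hroot2 : u2^2 - s*u2 + 1 = 0 := by
      rw [hu2]; linear_combination (1/4 : ℂ) * hd
    have habs12 : ‖u1‖ * ‖u2‖ = 1 := by
      rw [← norm_mul, hprod, norm_one]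
    have hne1 : ‖u1‖ ≠ 1 := key u1 hroot1
    have hne2 : ‖u2‖ ≠ 1 := key u2 hroot2
    have h1pos : 0 < ‖u1‖ := by
      rcases (norm_nonneg u1).lt_or_eq with h | h
      · exact h
      · exfalso; rw [← h] at habs12; simp at habs12
    obtain ⟨up, um, hupm, hsum', hup, hum⟩ :
        ∃ up um : ℂ, up * um = 1 ∧ up + um = s ∧ 1 < ‖up‖ ∧ ‖um‖ < 1 := by
      by_cases hcase : 1 < ‖u1‖
      · refine ⟨u1, u2, hprod, hsum12, hcase, ?_⟩
        nlinarith
      · have h1lt : ‖u1‖ < 1 := lt_of_le_of_ne (not_lt.mp hcase) hne1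
        refine ⟨u2, u1, by rw [mul_comm]; exact hprod, by rw [add_comm]; exact hsum12, ?_, h1lt⟩
        nlinarith
    have hup0 : up ≠ 0 := by
      intro hcon; rw [hcon] at hup; simp at hup; linarith
    have hum0 : um ≠ 0 := by
      intro hcon; rw [hcon, mul_zero] at hupm; simp at hupm
    have hune : up ≠ um := by
      intro hcon; rw [hcon] at hup; linarith
    have hupum : up - um ≠ 0 := sub_ne_zero.mpr hune
    have huinv : up⁻¹ = um := inv_eq_of_mul_eq_one_right hupm
    have hzeq : z = c + g/4 * (up + up⁻¹) := by
      rw [huinv, hsum']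
      linear_combination hzc
    have hwz : w z = g/4 * (up⁻¹ - up) := by
      rw [hzeq]
      exact w_eq hlt hw_an hw_sq hw_lim up hup
    have hwz' : w z = g/4 * (um - up) := by rw [hwz, huinv]
    have hwz0 : w z ≠ 0 := by
      rw [hwz']
      exact mul_ne_zero hg4 (sub_ne_zero.mpr (fun hcon => hune hcon.symm))
    refine ⟨hwz0, ?_⟩
    -- the contour integral in the u variable
    set K : ℂ → ℂ := fun x => (-(g/4))⁻¹ * Complex.I⁻¹ * (up - um)⁻¹ * ((x - up)⁻¹ - (x - um)⁻¹)
      with hK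
    have habs_e : ∀ θ : ℝ, ‖Complex.exp (θ * Complex.I)‖ = 1 := fun θ =>
      Complex.norm_exp_ofReal_mul_I θ
    have hIint : (∫ θ in (0:ℝ)..(2*Real.pi),
        (z - c - g/2 * (Real.cos θ : ℂ))⁻¹) = ∮ x in C(0,1), K x := by
      rw [circleIntegral]
      refine intervalIntegral.integral_congr fun θ hθ => ?_
      have hcm : circleMap 0 1 θ = Complex.exp (θ * Complex.I) := by
        simp [circleMap]
      rw [deriv_circleMap, hcm]
      set u : ℂ := Complex.exp (θ * Complex.I) with hu
      have hu0 : u ≠ 0 := Complex.exp_ne_zero _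
      have huabs : ‖u‖ = 1 := habs_e θ
      have huup : u - up ≠ 0 := by
        intro hcon
        rw [sub_eq_zero] at hcon
        rw [hcon] at huabs; linarith
      have huum : u - um ≠ 0 := by
        intro hcon
        rw [sub_eq_zero] at hcon
        rw [hcon] at huabs; linarith
      have hcos : (Real.cos θ : ℂ) = (u + u⁻¹)/2 := by
        have h2c := Complex.two_cos (x := (θ:ℂ))
        rw [neg_mul, Complex.exp_neg, ← hu] at h2c
        rw [Complex.ofReal_cos]
        linear_combination (1/2 : ℂ) * h2c
      have huu : u * u⁻¹ = 1 := mul_inv_cancel₀ hu0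
      have hden_eq : z - c - g/2 * (Real.cos θ : ℂ)
          = -(g/4) * u⁻¹ * ((u - up) * (u - um)) := by
        have hexpand : (u - up) * (u - um) = u^2 - s*u + 1 := by
          linear_combination (-u) * hsum' + hupm
        rw [hexpand, hcos]
        linear_combination hzc + (g/4*(u - s)) * huu
      rw [hden_eq]
      simp only [hK, smul_eq_mul]
      have hg4' : -(g/4) ≠ 0 := neg_ne_zero.mpr hg4
      field_simp [Complex.I_ne_zero]
      ring
    -- evaluate the circle integral
    have hint_up : (∮ x in C(0,1), (x - up)⁻¹) = 0 := by
      have hcont : ContinuousOn (fun x : ℂ => (x - up)⁻¹) (Metric.closedBall 0 1) := by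
        apply ContinuousOn.inv₀ ((continuous_sub_right up).continuousOn)
        intro y hy
        have hy1 : ‖y‖ ≤ 1 := by
          rw [Metric.mem_closedBall, Complex.dist_eq, sub_zero] at hy; exact hy
        intro hcon
        rw [sub_eq_zero] at hcon
        rw [← hcon] at hup
        linarith
      have hdiff : ∀ x ∈ Metric.ball (0:ℂ) 1 \ (∅ : Set ℂ),
          DifferentiableAt ℂ (fun x => (x - up)⁻¹) x := by
        intro x hx
        have hx1 : ‖x‖ < 1 := by
          have := hx.1
          rwa [Metric.mem_ball, Complex.dist_eq, sub_zero] at this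
        apply DifferentiableAt.inv (by fun_prop)
        intro hcon
        rw [sub_eq_zero] at hcon
        rw [← hcon] at hup
        linarith
      exact Complex.circleIntegral_eq_zero_of_differentiable_on_off_countable zero_le_one
        Set.countable_empty hcont hdiff
    have hint_um : (∮ x in C(0,1), (x - um)⁻¹) = 2 * Real.pi * Complex.I := by
      apply circleIntegral.integral_sub_inv_of_mem_ball
      rw [Metric.mem_ball, Complex.dist_eq, sub_zero]
      exact hum
    have hci_up : CircleIntegrable (fun x => (x - up)⁻¹) 0 1 := by
      rw [circleIntegrable_sub_inv_iff]
      right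
      intro hcon
      rw [Metric.mem_sphere, Complex.dist_eq, sub_zero] at hcon
      rw [hcon] at hup
      simp at hup
    have hci_um : CircleIntegrable (fun x => (x - um)⁻¹) 0 1 := by
      rw [circleIntegrable_sub_inv_iff]
      right
      intro hcon
      rw [Metric.mem_sphere, Complex.dist_eq, sub_zero] at hcon
      rw [hcon] at hum
      simp at hum
    have hKval : (∮ x in C(0,1), K x)
        = (-(g/4))⁻¹ * Complex.I⁻¹ * (up - um)⁻¹ * (0 - 2 * Real.pi * Complex.I) := by
      calc (∮ x in C(0,1), K x)
          = ∮ x in C(0,1), (-(g/4))⁻¹ * Complex.I⁻¹ * (up - um)⁻¹ *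
              ((x - up)⁻¹ - (x - um)⁻¹) := rfl
        _ = (-(g/4))⁻¹ * Complex.I⁻¹ * (up - um)⁻¹ *
              ∮ x in C(0,1), ((x - up)⁻¹ - (x - um)⁻¹) := by
            rw [← circleIntegral.integral_const_mul]
        _ = (-(g/4))⁻¹ * Complex.I⁻¹ * (up - um)⁻¹ * (0 - 2 * Real.pi * Complex.I) := by
            rw [circleIntegral.integral_sub hci_up hci_um, hint_up, hint_um]
    rw [hIint, hKval, hwz']
    have hI0 : Complex.I ≠ 0 := Complex.I_ne_zero
    have hII : Complex.I⁻¹ * Complex.I = 1 := inv_mul_cancel₀ hI0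
    have hgum : g/4*(um - up) ≠ 0 := by
      rw [← hwz']; exact hwz0
    rw [eq_div_iff hgum]
    have hstep : (-(g/4))⁻¹ * Complex.I⁻¹ * (up - um)⁻¹ * (0 - 2*(Real.pi:ℂ)*Complex.I)
          * (g/4*(um - up))
        = (-(g/4))⁻¹ * (g/4) * ((up - um)⁻¹ * (um - up)) * (-(2*(Real.pi:ℂ)))
          * (Complex.I⁻¹ * Complex.I) := by ring
    rw [hstep, hII, mul_one]
    have hg4' : -(g/4) ≠ 0 := neg_ne_zero.mpr hg4
    have e1 : (-(g/4))⁻¹ * (g/4) = -1 := by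
      field_simp
    have e2 : (up - um)⁻¹ * (um - up) = -1 := by
      rw [show um - up = -(up - um) by ring]
      field_simp
    rw [e1, e2]
    ring

/-- **A vanishing normalized contour integral forces a root in the gap**
(Lemma 7.2, abstract form). -/
theorem vanishing_contour_integral_forces_root_in_gap
    (a b : ℝ) (hab : a ≤ b) (w : ℂ → ℂ)
    (hw_an : DifferentiableOn ℂ w (seg (a : ℂ) (b : ℂ))ᶜ)
    (hw_sq : ∀ z ∉ seg (a : ℂ) (b : ℂ), w z ^ 2 = ((a : ℂ) - z) * ((b : ℂ) - z))
    (hw_lim : Tendsto (fun z : ℂ => w z / ((((a + b) / 2 : ℝ) : ℂ) - z))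
      (Filter.comap (fun z : ℂ => ‖z‖) Filter.atTop) (nhds 1))
    (r : ℝ) (hr : |a - b| / 2 < r)
    (U : Set ℂ) (hU : IsOpen U)
    (hball : Metric.closedBall ((((a + b) / 2 : ℝ) : ℂ)) r ⊆ U)
    (h : ℂ → ℂ) (hh_an : DifferentiableOn ℂ h U)
    (hh_real : ∀ x : ℝ, (x : ℂ) ∈ U → (h (x : ℂ)).im = 0)
    (hh_ne : ∀ x ∈ Set.Icc a b, h (x : ℂ) ≠ 0)
    (f : ℂ → ℂ) (hf_an : DifferentiableOn ℂ f U)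
    (hf_real : ∀ x : ℝ, (x : ℂ) ∈ U → (f (x : ℂ)).im = 0)
    (hint : (∮ z in C((((a + b) / 2 : ℝ) : ℂ), r), f z * h z / w z) = 0) :
    ∃ ν ∈ Set.Icc a b, f (ν : ℂ) = 0 := by
  by_contra hcon
  push_neg at hcon
  set c : ℂ := (((a + b) / 2 : ℝ) : ℂ) with hc
  have hr0 : 0 < r := lt_of_le_of_lt (by positivity) hr
  have hpiC : (Real.pi : ℂ) ≠ 0 := Complex.ofReal_ne_zero.mpr Real.pi_ne_zero
  have h2pi : (0:ℝ) ≤ 2*Real.pi := by positivity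
  have hIccU : ∀ x ∈ Set.Icc a b, ((x:ℝ):ℂ) ∈ U := by
    intro x hx
    apply hball
    rw [Metric.mem_closedBall, Complex.dist_eq]
    have e : ((x:ℝ):ℂ) - c = ((x - (a+b)/2 : ℝ) : ℂ) := by rw [hc]; push_cast; ring
    rw [e, Complex.norm_real, Real.norm_eq_abs]
    have h1 : |x - (a+b)/2| ≤ (b-a)/2 := by
      rw [abs_le]; constructor
      · linarith [hx.1]
      · linarith [hx.2]
    have h2 : (b-a)/2 ≤ |a-b|/2 := by
      have := le_abs_self (b - a)
      rw [abs_sub_comm] at this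
      linarith
    linarith [le_of_lt hr]
  set xr : ℝ → ℝ := fun θ => (a+b)/2 + (a-b)/2 * Real.cos θ with hxr
  have hxr_mem : ∀ θ : ℝ, xr θ ∈ Set.Icc a b := by
    intro θ
    rw [hxr]
    constructor
    · dsimp only
      nlinarith [Real.neg_one_le_cos θ, Real.cos_le_one θ]
    · dsimp only
      nlinarith [Real.neg_one_le_cos θ, Real.cos_le_one θ]
  have hxC : ∀ θ : ℝ, c + ((a-b:ℝ):ℂ)/2 * (Real.cos θ : ℂ) = ((xr θ : ℝ):ℂ) := by
    intro θ; rw [hxr, hc]; push_cast; ring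
  have habs_xr : ∀ θ : ℝ, ‖((xr θ : ℝ):ℂ) - c‖ ≤ |a-b|/2 := by
    intro θ
    have e : ((xr θ : ℝ):ℂ) - c = (((a-b)/2 * Real.cos θ : ℝ) : ℂ) := by
      rw [hxr, hc]; push_cast; ring
    rw [e, Complex.norm_real, Real.norm_eq_abs, abs_mul, abs_div]
    have h1 : |Real.cos θ| ≤ 1 := Real.abs_cos_le_one θ
    have h2 : (0:ℝ) ≤ |a-b|/2 := by positivity
    calc |a-b|/|2| * |Real.cos θ| ≤ |a-b|/|2| * 1 := by
          apply mul_le_mul_of_nonneg_left h1 (by positivity)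
      _ = |a-b|/2 := by norm_num
  have hcirc : ∀ s : ℝ, ‖circleMap c r s - c‖ = r := by
    intro s; rw [circleMap_sub_center, norm_circleMap_zero, abs_of_pos hr0]
  have hinner := fun s : ℝ => inner_int hab hw_an hw_sq hw_lim hr (hcirc s)
  have hDne : ∀ s θ : ℝ, circleMap c r s - c - ((a-b:ℝ):ℂ)/2 * (Real.cos θ : ℂ) ≠ 0 := by
    intro s θ hzero
    have e : circleMap c r s = ((xr θ : ℝ):ℂ) := by
      rw [← hxC θ]; linear_combination hzero
    have := hcirc s
    rw [e] at this
    have h2 := habs_xr θ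
    rw [this] at h2
    linarith
  -- Step 1 : the contour integral as a double integral
  have key1 : (∮ z in C(c, r), f z * h z / w z)
      = ∫ s in (0:ℝ)..(2*Real.pi), ∫ θ in (0:ℝ)..(2*Real.pi),
          (deriv (circleMap c r) s * (f (circleMap c r s) * h (circleMap c r s))
            * (-(2*(Real.pi:ℂ))⁻¹))
          * (circleMap c r s - c - ((a-b:ℝ):ℂ)/2 * (Real.cos θ : ℂ))⁻¹ := by
    rw [circleIntegral]
    refine intervalIntegral.integral_congr fun s hs => ?_
    rw [intervalIntegral.integral_const_mul, (hinner s).2, smul_eq_mul]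
    have hw0 := (hinner s).1
    field_simp
  -- Step 2 : swap
  have key2 : (∫ s in (0:ℝ)..(2*Real.pi), ∫ θ in (0:ℝ)..(2*Real.pi),
          (deriv (circleMap c r) s * (f (circleMap c r s) * h (circleMap c r s))
            * (-(2*(Real.pi:ℂ))⁻¹))
          * (circleMap c r s - c - ((a-b:ℝ):ℂ)/2 * (Real.cos θ : ℂ))⁻¹)
      = ∫ θ in (0:ℝ)..(2*Real.pi), ∫ s in (0:ℝ)..(2*Real.pi),
          (deriv (circleMap c r) s * (f (circleMap c r s) * h (circleMap c r s))
            * (-(2*(Real.pi:ℂ))⁻¹))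
          * (circleMap c r s - c - ((a-b:ℝ):ℂ)/2 * (Real.cos θ : ℂ))⁻¹ := by
    apply interval_swap h2pi
    have huncurry : Function.uncurry (fun s θ : ℝ =>
        (deriv (circleMap c r) s * (f (circleMap c r s) * h (circleMap c r s))
            * (-(2*(Real.pi:ℂ))⁻¹))
          * (circleMap c r s - c - ((a-b:ℝ):ℂ)/2 * (Real.cos θ : ℂ))⁻¹)
        = fun p : ℝ × ℝ =>
        (deriv (circleMap c r) p.1 * (f (circleMap c r p.1) * h (circleMap c r p.1))
            * (-(2*(Real.pi:ℂ))⁻¹))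
          * (circleMap c r p.1 - c - ((a-b:ℝ):ℂ)/2 * (Real.cos p.2 : ℂ))⁻¹ := rfl
    rw [huncurry]
    have hmapU : ∀ p : ℝ × ℝ, circleMap c r p.1 ∈ U := fun p =>
      hball (circleMap_mem_closedBall c hr0.le p.1)
    have hder : Continuous fun p : ℝ × ℝ => deriv (circleMap c r) p.1 := by
      simp only [deriv_circleMap]
      exact ((continuous_circleMap 0 r).mul continuous_const).comp continuous_fst
    have hcm : Continuous fun p : ℝ × ℝ => circleMap c r p.1 :=
      (continuous_circleMap c r).comp continuous_fst
    have hfh : ContinuousOn (fun p : ℝ × ℝ =>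
        f (circleMap c r p.1) * h (circleMap c r p.1)) Set.univ := by
      have hfc : ContinuousOn (fun p : ℝ × ℝ => f (circleMap c r p.1)) Set.univ :=
        hf_an.continuousOn.comp hcm.continuousOn (fun p _ => hmapU p)
      have hhc : ContinuousOn (fun p : ℝ × ℝ => h (circleMap c r p.1)) Set.univ :=
        hh_an.continuousOn.comp hcm.continuousOn (fun p _ => hmapU p)
      exact hfc.mul hhc
    have hD : Continuous fun p : ℝ × ℝ =>
        circleMap c r p.1 - c - ((a-b:ℝ):ℂ)/2 * (Real.cos p.2 : ℂ) := by
      refine (hcm.sub continuous_const).sub (continuous_const.mul ?_)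
      exact Complex.continuous_ofReal.comp (Real.continuous_cos.comp continuous_snd)
    refine ContinuousOn.mono ?_ (Set.subset_univ _)
    refine ContinuousOn.mul ?_ (hD.continuousOn.inv₀ (fun p _ => hDne p.1 p.2))
    exact (hder.continuousOn.mul hfh).mul continuousOn_const
  -- Step 3 : inner integral via Cauchy
  have key3 : ∀ θ : ℝ, (∫ s in (0:ℝ)..(2*Real.pi),
      (deriv (circleMap c r) s * (f (circleMap c r s) * h (circleMap c r s))
            * (-(2*(Real.pi:ℂ))⁻¹))
          * (circleMap c r s - c - ((a-b:ℝ):ℂ)/2 * (Real.cos θ : ℂ))⁻¹)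
      = -Complex.I * (f (((xr θ : ℝ)):ℂ) * h (((xr θ : ℝ)):ℂ)) := by
    intro θ
    have hxmem : (((xr θ : ℝ)):ℂ) ∈ Metric.ball c r := by
      rw [Metric.mem_ball, Complex.dist_eq]
      exact lt_of_le_of_lt (habs_xr θ) hr
    have hcauchy : (∮ z in C(c, r), (z - (((xr θ : ℝ)):ℂ))⁻¹ • (f z * h z))
        = (2 * (Real.pi:ℂ) * Complex.I) • (f (((xr θ : ℝ)):ℂ) * h (((xr θ : ℝ)):ℂ)) := by
      have hgd : DifferentiableOn ℂ (fun z => f z * h z) (Metric.closedBall c r) :=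
        (hf_an.mul hh_an).mono hball
      have := hgd.circleIntegral_sub_inv_smul hxmem
      convert this using 2
    have hcirc_eq : (∮ z in C(c,r), (z - (((xr θ : ℝ)):ℂ))⁻¹ • (f z * h z))
        = ∫ s in (0:ℝ)..(2*Real.pi), deriv (circleMap c r) s *
            ((circleMap c r s - (((xr θ : ℝ)):ℂ))⁻¹
              * (f (circleMap c r s) * h (circleMap c r s))) := by
      rw [circleIntegral]
      simp only [smul_eq_mul]
    calc (∫ s in (0:ℝ)..(2*Real.pi),
        (deriv (circleMap c r) s * (f (circleMap c r s) * h (circleMap c r s))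
            * (-(2*(Real.pi:ℂ))⁻¹))
          * (circleMap c r s - c - ((a-b:ℝ):ℂ)/2 * (Real.cos θ : ℂ))⁻¹)
        = ∫ s in (0:ℝ)..(2*Real.pi), (-(2*(Real.pi:ℂ))⁻¹) *
            (deriv (circleMap c r) s * ((circleMap c r s - (((xr θ : ℝ)):ℂ))⁻¹
              * (f (circleMap c r s) * h (circleMap c r s)))) := by
          refine intervalIntegral.integral_congr fun s hs => ?_
          have e : circleMap c r s - c - ((a-b:ℝ):ℂ)/2 * (Real.cos θ : ℂ)
              = circleMap c r s - (((xr θ : ℝ)):ℂ) := by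
            rw [← hxC θ]; ring
          rw [e]
          ring
      _ = (-(2*(Real.pi:ℂ))⁻¹) * ∫ s in (0:ℝ)..(2*Real.pi),
            (deriv (circleMap c r) s * ((circleMap c r s - (((xr θ : ℝ)):ℂ))⁻¹
              * (f (circleMap c r s) * h (circleMap c r s)))) :=
          intervalIntegral.integral_const_mul _ _
      _ = (-(2*(Real.pi:ℂ))⁻¹) * ((2 * (Real.pi:ℂ) * Complex.I) •
            (f (((xr θ : ℝ)):ℂ) * h (((xr θ : ℝ)):ℂ))) := by
          rw [← hcirc_eq, hcauchy]
      _ = -Complex.I * (f (((xr θ : ℝ)):ℂ) * h (((xr θ : ℝ)):ℂ)) := by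
          rw [smul_eq_mul]
          field_simp
  -- Step 4 : the integral of f*h over the gap vanishes
  have hcont_fh : ContinuousOn (fun θ : ℝ => f (((xr θ : ℝ)):ℂ) * h (((xr θ : ℝ)):ℂ))
      (Set.uIcc 0 (2*Real.pi)) := by
    have hxrc : Continuous fun θ : ℝ => (((xr θ : ℝ)):ℂ) := by
      apply Complex.continuous_ofReal.comp
      rw [hxr]
      continuity
    have h1 : ContinuousOn (fun θ : ℝ => f (((xr θ : ℝ)):ℂ)) (Set.uIcc 0 (2*Real.pi)) :=
      hf_an.continuousOn.comp hxrc.continuousOn (fun θ _ => hIccU _ (hxr_mem θ))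
    have h2 : ContinuousOn (fun θ : ℝ => h (((xr θ : ℝ)):ℂ)) (Set.uIcc 0 (2*Real.pi)) :=
      hh_an.continuousOn.comp hxrc.continuousOn (fun θ _ => hIccU _ (hxr_mem θ))
    exact h1.mul h2
  have key4 : (∫ θ in (0:ℝ)..(2*Real.pi), f (((xr θ : ℝ)):ℂ) * h (((xr θ : ℝ)):ℂ)) = 0 := by
    have h0 : (0:ℂ) = ∫ θ in (0:ℝ)..(2*Real.pi),
        -Complex.I * (f (((xr θ : ℝ)):ℂ) * h (((xr θ : ℝ)):ℂ)) := by
      rw [← intervalIntegral.integral_congr (fun θ _ => key3 θ), ← key2, ← key1, hint]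
    rw [intervalIntegral.integral_const_mul] at h0
    have := h0.symm
    rcases mul_eq_zero.1 this with h1 | h1
    · exfalso
      apply Complex.I_ne_zero
      have : -Complex.I = 0 := h1
      linear_combination -this
    · exact h1
  -- Step 5 : real parts and sign
  have him0 : ∀ x ∈ Set.Icc a b, (f ((x:ℝ):ℂ) * h ((x:ℝ):ℂ)).im = 0 := by
    intro x hx
    rw [Complex.mul_im, hf_real x (hIccU x hx), hh_real x (hIccU x hx)]
    ring
  have hre_ne : ∀ x ∈ Set.Icc a b, (f ((x:ℝ):ℂ) * h ((x:ℝ):ℂ)).re ≠ 0 := by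
    intro x hx h0
    have : f ((x:ℝ):ℂ) * h ((x:ℝ):ℂ) = 0 := by
      apply Complex.ext
      · simpa using h0
      · simpa using him0 x hx
    rcases mul_eq_zero.1 this with h1 | h1
    · exact hcon x hx h1
    · exact hh_ne x hx h1
  set p : ℝ → ℝ := fun x => (f ((x:ℝ):ℂ) * h ((x:ℝ):ℂ)).re with hp
  have hp_cont : ContinuousOn p (Set.Icc a b) := by
    have h1 : ContinuousOn (fun x : ℝ => f ((x:ℝ):ℂ)) (Set.Icc a b) :=
      hf_an.continuousOn.comp Complex.continuous_ofReal.continuousOn (fun x hx => hIccU x hx)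
    have h2 : ContinuousOn (fun x : ℝ => h ((x:ℝ):ℂ)) (Set.Icc a b) :=
      hh_an.continuousOn.comp Complex.continuous_ofReal.continuousOn (fun x hx => hIccU x hx)
    exact Complex.continuous_re.comp_continuousOn (h1.mul h2)
  have hsign : (∀ x ∈ Set.Icc a b, 0 < p x) ∨ (∀ x ∈ Set.Icc a b, p x < 0) := by
    by_contra hd
    push_neg at hd
    obtain ⟨⟨x, hx, hpx⟩, ⟨y, hy, hpy⟩⟩ := hd
    have hsub : Set.uIcc x y ⊆ Set.Icc a b := Set.uIcc_subset_Icc hx hy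
    have hpc : ContinuousOn p (Set.uIcc x y) := hp_cont.mono hsub
    have h0m : (0:ℝ) ∈ Set.uIcc (p x) (p y) := by
      rw [Set.mem_uIcc]
      left; exact ⟨hpx, hpy⟩
    obtain ⟨z, hz, hpz⟩ := intermediate_value_uIcc hpc h0m
    exact hre_ne z (hsub hz) hpz
  have hIre : (∫ θ in (0:ℝ)..(2*Real.pi), p (xr θ)) = 0 := by
    have hint_c : IntervalIntegrable (fun θ : ℝ => f (((xr θ : ℝ)):ℂ) * h (((xr θ : ℝ)):ℂ))
        MeasureTheory.volume 0 (2*Real.pi) := hcont_fh.intervalIntegrable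
    have := (Complex.reCLM : ℂ →L[ℝ] ℝ).intervalIntegral_comp_comm hint_c
    rw [key4] at this
    simpa [hp] using this
  have hxr_cont : Continuous xr := by rw [hxr]; continuity
  have hpint : IntervalIntegrable (fun θ => p (xr θ)) MeasureTheory.volume 0 (2*Real.pi) := by
    apply ContinuousOn.intervalIntegrable
    exact hp_cont.comp hxr_cont.continuousOn (fun θ _ => hxr_mem θ)
  rcases hsign with hpos | hneg
  · have : 0 < ∫ θ in (0:ℝ)..(2*Real.pi), p (xr θ) := by
      apply intervalIntegral.intervalIntegral_pos_of_pos_on hpint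
      · intro θ _
        exact hpos _ (hxr_mem θ)
      · positivity
    rw [hIre] at this
    exact lt_irrefl 0 this
  · have : 0 < ∫ θ in (0:ℝ)..(2*Real.pi), -p (xr θ) := by
      apply intervalIntegral.intervalIntegral_pos_of_pos_on
      · exact hpint.neg
      · intro θ _
        have := hneg _ (hxr_mem θ)
        linarith
      · positivity
    rw [intervalIntegral.integral_neg, hIre, neg_zero] at this
    exact lt_irrefl 0 this
end
end

section
/- Liouville's theorem on the punctured plane (Lemma A.1). Let f : ℂ → ℂ be analytic on ℂ∖{0}. Suppose there exists M ≥ 0 such that for every integer N ≥ 1 one has |f(λ)| ≤ M for all λ with |λ| = Nπ + π/2 and |f(λ)| ≤ M for all λ with |λ| = 1/(16(Nπ + π/2)). Then f is constant on ℂ∖{0}. -/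
noncomputable section

open Set Metric Complex Filter Bornology Topology

/-- **Liouville's theorem on the punctured plane** (Lemma A.1): an analytic function on
`ℂ∖{0}` which is uniformly bounded on all the circles `|λ| = Nπ + π/2` and
`|λ| = 1/(16(Nπ + π/2))`, `N ≥ 1`, is constant. -/
theorem liouville_punctured_plane
    (f : ℂ → ℂ) (hf : DifferentiableOn ℂ f {(0 : ℂ)}ᶜ)
    (M : ℝ) (hM : 0 ≤ M)
    (hbig : ∀ N : ℕ, 1 ≤ N → ∀ z : ℂ,
      ‖z‖ = (N : ℝ) * Real.pi + Real.pi / 2 → ‖f z‖ ≤ M)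
    (hsmall : ∀ N : ℕ, 1 ≤ N → ∀ z : ℂ,
      ‖z‖ = 1 / (16 * ((N : ℝ) * Real.pi + Real.pi / 2)) → ‖f z‖ ≤ M) :
    ∃ c : ℂ, ∀ z : ℂ, z ≠ 0 → f z = c := by
  have pi_pos := Real.pi_pos
  -- Step 1: f is bounded by M on ℂ \ {0}
  have hbound : ∀ z : ℂ, z ≠ 0 → ‖f z‖ ≤ M := by
    intro z hz
    have habs : 0 < ‖z‖ := by simpa [norm_pos_iff] using hz
    obtain ⟨N₀, hN₀⟩ := exists_nat_gt (max (‖z‖) (1 / (16 * ‖z‖)) / Real.pi)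
    set N : ℕ := max N₀ 1 with hNdef
    have hN1 : 1 ≤ N := le_max_right _ _
    have hNge : (N₀ : ℝ) ≤ N := by exact_mod_cast le_max_left _ _
    set R : ℝ := (N : ℝ) * Real.pi + Real.pi / 2 with hRdef
    have hmax : max (‖z‖) (1 / (16 * ‖z‖)) < (N : ℝ) * Real.pi := by
      rw [div_lt_iff₀ pi_pos] at hN₀
      calc max (‖z‖) (1 / (16 * ‖z‖)) < (N₀ : ℝ) * Real.pi := hN₀
        _ ≤ (N : ℝ) * Real.pi := by nlinarith
    have hRz : ‖z‖ < R := by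
      have := (le_max_left (‖z‖) (1 / (16 * ‖z‖))).trans_lt hmax
      simp only [hRdef]; linarith
    have hRpos : 0 < R := habs.trans hRz
    set r : ℝ := 1 / (16 * R) with hrdef
    have hrpos : 0 < r := by positivity
    have hrz : r < ‖z‖ := by
      have h2 : 1 / (16 * ‖z‖) < R := by
        have := (le_max_right (‖z‖) (1 / (16 * ‖z‖))).trans_lt hmax
        simp only [hRdef]; linarith
      rw [hrdef, div_lt_iff₀ (by positivity)]
      rw [div_lt_iff₀ (by positivity)] at h2
      nlinarith
    set U : Set ℂ := ball (0 : ℂ) R \ closedBall 0 r with hUdef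
    have hUball : U ⊆ (ball (0 : ℂ) r)ᶜ := by
      intro w hw
      simp only [hUdef, mem_diff, mem_closedBall, not_le] at hw
      simp only [mem_compl_iff, mem_ball, not_lt]
      linarith [hw.2]
    have hclU : closure U ⊆ {(0 : ℂ)}ᶜ := by
      refine (closure_minimal hUball isOpen_ball.isClosed_compl).trans ?_
      intro w hw
      simp only [mem_compl_iff, mem_ball, not_lt] at hw
      simp only [mem_compl_iff, mem_singleton_iff]
      intro h; rw [h] at hw; simp at hw; linarith
    have hUsub : U ⊆ {(0 : ℂ)}ᶜ := subset_closure.trans hclU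
    have hfr : ∀ w ∈ frontier U, ‖f w‖ ≤ M := by
      intro w hw
      have := frontier_inter_subset (ball (0 : ℂ) R) (closedBall 0 r)ᶜ
      rw [hUdef, diff_eq] at hw
      rcases this hw with h | h
      · have hsphere : w ∈ sphere (0 : ℂ) R := by
          rw [← frontier_ball (0 : ℂ) hRpos.ne']
          exact h.1
        exact hbig N hN1 w (by simpa [Complex.dist_eq] using hsphere)
      · have hsphere : w ∈ sphere (0 : ℂ) r := by
          have := h.2
          rwa [frontier_compl, frontier_closedBall (0 : ℂ) hrpos.ne'] at this
        exact hsmall N hN1 w (by simpa [Complex.dist_eq, hrdef] using hsphere)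
    have hdiff : DiffContOnCl ℂ f U :=
      ⟨hf.mono hUsub, (hf.continuousOn).mono hclU⟩
    have hzU : z ∈ closure U := subset_closure (by
      simp only [hUdef, mem_diff, mem_ball, mem_closedBall, Complex.dist_eq, sub_zero, not_le]
      exact ⟨hRz, hrz⟩)
    exact norm_le_of_forall_mem_frontier_norm_le (isBounded_ball.subset diff_subset) hdiff hfr hzU
  -- Step 2: removable singularity and Liouville
  set g : ℂ → ℂ := Function.update f 0 (limUnder (𝓝[≠] (0:ℂ)) f) with hgdef
  have huniv : (univ : Set ℂ) \ {0} = {(0:ℂ)}ᶜ := by ext w; simp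
  have hbdd : BddAbove (norm ∘ f '' ((univ : Set ℂ) \ {0})) := by
    refine ⟨M, ?_⟩
    rintro x ⟨w, hw, rfl⟩
    rw [huniv] at hw
    exact hbound w hw
  have hgdiff : Differentiable ℂ g := by
    rw [← differentiableOn_univ]
    exact differentiableOn_update_limUnder_of_bddAbove univ_mem (by rw [huniv]; exact hf) hbdd
  have hgeq : ∀ w : ℂ, w ≠ 0 → g w = f w := fun w hw => Function.update_of_ne hw _ _
  have hgbound : IsBounded (range g) := by
    refine (isBounded_closedBall (x := (0:ℂ)) (r := max M ‖g 0‖)).subset ?_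
    rintro x ⟨w, rfl⟩
    rcases eq_or_ne w 0 with rfl | hw
    · simp [mem_closedBall, dist_eq_norm, le_max_right]
    · rw [mem_closedBall, dist_eq_norm, sub_zero, hgeq w hw]
      exact le_max_of_le_left (hbound w hw)
  refine ⟨f 1, fun w hw => ?_⟩
  have := hgdiff.apply_eq_apply_of_bounded hgbound w 1
  rwa [hgeq w hw, hgeq 1 one_ne_zero] at this
end
end
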